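/- arXiv:2410.18761 — 3 statements merged into one kernel-verified Lean document; each statement's English description precedes it below -/
import Mathlib

section
/- Let Φ be a reduced irreducible root system in ℝ^d with d ≥ 2, and let u, v, w ∈ ℂ^d be linearly independent over ℂ with (θ_ℂ(u), θ_ℂ(v), θ_ℂ(w)) ≠ (0,0,0) for every θ ∈ Φ. If every point of Z := ⋃_{θ∈Φ} Z(q_θ) is transversal (i.e., Z contains no tangential point), then #Z ≥ 3. -/
noncomputable section

/-- The standard inner product on `ℝ^d`. -/
def dotR {d : ℕ} (x y : Fin d → ℝ) : ℝ := ∑ i, x i * y i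

/-- `Φ` is a root system in `ℝ^d`: a finite set of nonzero vectors spanning `ℝ^d`,
closed under the reflections `s_α`, with integral Cartan numbers. -/
def IsRootSystem {d : ℕ} (Φ : Finset (Fin d → ℝ)) : Prop :=
  (∀ α ∈ Φ, α ≠ 0) ∧
  Submodule.span ℝ (Φ : Set (Fin d → ℝ)) = ⊤ ∧
  (∀ α ∈ Φ, ∀ β ∈ Φ, β - (2 * dotR β α / dotR α α) • α ∈ Φ) ∧
  (∀ α ∈ Φ, ∀ β ∈ Φ, ∃ n : ℤ, 2 * dotR β α / dotR α α = (n : ℝ))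

/-- `Φ` is reduced: the only multiples of a root `α` in `Φ` are `±α`. -/
def IsReducedRS {d : ℕ} (Φ : Finset (Fin d → ℝ)) : Prop :=
  ∀ α ∈ Φ, ∀ t : ℝ, t • α ∈ Φ → t = 1 ∨ t = -1

/-- `Φ` is irreducible: it is not the disjoint union of two nonempty mutually
orthogonal subsets. -/
def IsIrreducibleRS {d : ℕ} (Φ : Finset (Fin d → ℝ)) : Prop :=
  ∀ A B : Set (Fin d → ℝ), (Φ : Set (Fin d → ℝ)) = A ∪ B → Disjoint A B →
    (∀ a ∈ A, ∀ b ∈ B, dotR a b = 0) → A = ∅ ∨ B = ∅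

/-- The complexification `θ_ℂ : ℂ^d → ℂ` of the linear functional `z ↦ Σ θᵢ zᵢ`. -/
def thetaC {d : ℕ} (θ : Fin d → ℝ) (z : Fin d → ℂ) : ℂ := ∑ i, (θ i : ℂ) * z i

/-- The zero set `Z(q_θ) ⊆ ℙ¹(ℂ)` of the binary quadratic
`q_θ(z₁,z₂) = θ_ℂ(u)z₁² + θ_ℂ(v)z₁z₂ + θ_ℂ(w)z₂²`. The condition is invariant under
rescaling a representative, so it is well defined on `ℙ¹(ℂ)`. -/
def qZero {d : ℕ} (u v w : Fin d → ℂ) (θ : Fin d → ℝ) :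
    Set (Projectivization ℂ (Fin 2 → ℂ)) :=
  {p | thetaC θ u * p.rep 0 ^ 2 + thetaC θ v * (p.rep 0 * p.rep 1)
        + thetaC θ w * p.rep 1 ^ 2 = 0}

/-- The discriminant `disc(q_θ) = θ_ℂ(v)² − 4·θ_ℂ(u)·θ_ℂ(w)`. -/
def discQ {d : ℕ} (u v w : Fin d → ℂ) (θ : Fin d → ℝ) : ℂ :=
  thetaC θ v ^ 2 - 4 * thetaC θ u * thetaC θ w

open Projectivization

/-! ### Auxiliary lemmas -/

lemma vec2_ne_zero {α β : ℂ} (h : ¬ (α = 0 ∧ β = 0)) : ![β, -α] ≠ (0 : Fin 2 → ℂ) := by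
  intro h0
  apply h
  have h1 : β = 0 := congrFun h0 0
  have h2 : -α = 0 := congrFun h0 1
  exact ⟨by simpa using h2, h1⟩

lemma linfac (α β : ℂ) (hb : ![β, -α] ≠ (0 : Fin 2 → ℂ)) (x : Fin 2 → ℂ) (hx : x ≠ 0) :
    α * x 0 + β * x 1 = 0 ↔ Projectivization.mk ℂ x hx = Projectivization.mk ℂ ![β, -α] hb := by
  have hab : ¬ (α = 0 ∧ β = 0) := by
    rintro ⟨rfl, rfl⟩; exact hb (by funext i; fin_cases i <;> simp)
  rw [mk_eq_mk_iff']
  constructor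
  · intro h
    by_cases hβ : β = 0
    · have hα : α ≠ 0 := fun hα => hab ⟨hα, hβ⟩
      rw [hβ, zero_mul, add_zero] at h
      have hx0 : x 0 = 0 := (mul_eq_zero.mp h).resolve_left hα
      refine ⟨-(x 1) / α, ?_⟩
      funext i
      fin_cases i
      · show -(x 1) / α * β = x 0
        rw [hβ, hx0, mul_zero]
      · show -(x 1) / α * (-α) = x 1
        field_simp
    · refine ⟨x 0 / β, ?_⟩
      funext i
      fin_cases i
      · show x 0 / β * β = x 0
        field_simp
      · show x 0 / β * (-α) = x 1
        field_simp
        linear_combination -h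
  · rintro ⟨a, ha⟩
    have h0 : x 0 = a * β := by
      have := congrFun ha 0; simpa [mul_comm] using this.symm
    have h1 : x 1 = a * (-α) := by
      have := congrFun ha 1; simpa [mul_comm] using this.symm
    rw [h0, h1]; ring

lemma prop2 (x y : Fin 2 → ℂ) (hx : x ≠ 0) (hy : y ≠ 0) (h : x 0 * y 1 - x 1 * y 0 = 0) :
    Projectivization.mk ℂ x hx = Projectivization.mk ℂ y hy := by
  rw [mk_eq_mk_iff']
  by_cases hy0 : y 0 = 0
  · have hy1 : y 1 ≠ 0 := by
      intro hy1; exact hy ((by funext i; fin_cases i <;> simp [hy0, hy1]))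
    have hx0 : x 0 = 0 := by
      have : x 0 * y 1 = 0 := by rw [hy0] at h; linear_combination h
      exact (mul_eq_zero.mp this).resolve_right hy1
    refine ⟨x 1 / y 1, ?_⟩
    funext i
    fin_cases i
    · show x 1 / y 1 * y 0 = x 0; rw [hy0, hx0, mul_zero]
    · show x 1 / y 1 * y 1 = x 1; field_simp
  · refine ⟨x 0 / y 0, ?_⟩
    funext i
    fin_cases i
    · show x 0 / y 0 * y 0 = x 0; field_simp
    · show x 0 / y 0 * y 1 = x 1; field_simp; linear_combination h

lemma indep3 (x y : Fin 2 → ℂ) (hD : x 0 * y 1 - x 1 * y 0 ≠ 0) (r s t : ℂ)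
    (e0 : r * (x 1 * x 1) + s * (y 1 * y 1) + t * (x 1 * y 1) = 0)
    (e1 : r * (x 0 * x 1 + x 1 * x 0) + s * (y 0 * y 1 + y 1 * y 0) + t * (x 0 * y 1 + x 1 * y 0) = 0)
    (e2 : r * (x 0 * x 0) + s * (y 0 * y 0) + t * (x 0 * y 0) = 0) :
    r = 0 ∧ s = 0 ∧ t = 0 := by
  have hD2 : (x 0 * y 1 - x 1 * y 0) ^ 2 ≠ 0 := pow_ne_zero _ hD
  refine ⟨?_, ?_, ?_⟩
  · have h : r * (x 0 * y 1 - x 1 * y 0) ^ 2 = 0 := by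
      linear_combination (y 0 * y 0) * e0 - (y 0 * y 1) * e1 + (y 1 * y 1) * e2
    exact (mul_eq_zero.mp h).resolve_right hD2
  · have h : s * (x 0 * y 1 - x 1 * y 0) ^ 2 = 0 := by
      linear_combination (x 0 * x 0) * e0 - (x 0 * x 1) * e1 + (x 1 * x 1) * e2
    exact (mul_eq_zero.mp h).resolve_right hD2
  · have h : t * (x 0 * y 1 - x 1 * y 0) ^ 2 = 0 := by
      linear_combination (-2 * x 0 * y 0) * e0 + (x 0 * y 1 + x 1 * y 0) * e1 - (2 * x 1 * y 1) * e2
    exact (mul_eq_zero.mp h).resolve_right hD2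

lemma fact_quad (A B C : ℂ) (h : ¬ (A = 0 ∧ B = 0 ∧ C = 0)) :
    ∃ α β γ δ : ℂ, ¬ (α = 0 ∧ β = 0) ∧ ¬ (γ = 0 ∧ δ = 0) ∧
      A = α * γ ∧ B = α * δ + β * γ ∧ C = β * δ ∧
      B ^ 2 - 4 * A * C = (α * δ - β * γ) ^ 2 := by
  by_cases hA : A = 0
  · refine ⟨0, 1, B, C, by simp, ?_, by simp [hA], by ring, by ring, by rw [hA]; ring⟩
    rintro ⟨hB, hC⟩; exact h ⟨hA, hB, hC⟩
  · obtain ⟨sq, hsq⟩ := IsAlgClosed.exists_pow_nat_eq (k := ℂ) (B ^ 2 - 4 * A * C) zero_lt_two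
    set β := (B - sq) / 2 with hβdef
    set δ := (B + sq) / (2 * A) with hδdef
    have h2 : (2 : ℂ) ≠ 0 := two_ne_zero
    have h2A : (2 : ℂ) * A ≠ 0 := mul_ne_zero h2 hA
    have hβ : β * 2 = B - sq := div_mul_cancel₀ _ h2
    have hδ : δ * (2 * A) = B + sq := div_mul_cancel₀ _ h2A
    have h4A : (4 : ℂ) * A ≠ 0 := mul_ne_zero (by norm_num) hA
    refine ⟨A, β, 1, δ, by simp [hA], by simp, by ring, ?_, ?_, ?_⟩
    · linear_combination (-(1:ℂ)/2) * hδ - (1/2 : ℂ) * hβ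
    · have key : (4 * A) * (β * δ) = (4 * A) * C := by
        linear_combination (2 * A * δ) * hβ + (B - sq) * hδ - hsq
      exact (mul_left_cancel₀ h4A key).symm
    · have hsd : A * δ - β * 1 = sq := by
        linear_combination (1/2 : ℂ) * hδ - (1/2 : ℂ) * hβ
      rw [hsd]; exact hsq.symm

/-- Zero set of `q_θ` is a pair of points, with factorization data. -/
lemma qZero_pair {d : ℕ} (u v w : Fin d → ℂ) (θ : Fin d → ℝ)
    (h : ¬ (thetaC θ u = 0 ∧ thetaC θ v = 0 ∧ thetaC θ w = 0)) :
    ∃ (α β γ δ : ℂ) (hb : ![β, -α] ≠ (0 : Fin 2 → ℂ)) (hd' : ![δ, -γ] ≠ (0 : Fin 2 → ℂ)),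
      thetaC θ u = α * γ ∧ thetaC θ v = α * δ + β * γ ∧ thetaC θ w = β * δ ∧
      discQ u v w θ = (α * δ - β * γ) ^ 2 ∧
      qZero u v w θ = {Projectivization.mk ℂ ![β, -α] hb, Projectivization.mk ℂ ![δ, -γ] hd'} := by
  obtain ⟨α, β, γ, δ, hab, hgd, hA, hB, hC, hdisc⟩ := fact_quad _ _ _ h
  refine ⟨α, β, γ, δ, vec2_ne_zero hab, vec2_ne_zero hgd, hA, hB, hC, hdisc, ?_⟩
  ext p
  have hrep : p.rep ≠ 0 := p.rep_nonzero
  have hfac : thetaC θ u * p.rep 0 ^ 2 + thetaC θ v * (p.rep 0 * p.rep 1)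
      + thetaC θ w * p.rep 1 ^ 2
      = (α * p.rep 0 + β * p.rep 1) * (γ * p.rep 0 + δ * p.rep 1) := by
    rw [hA, hB, hC]; ring
  constructor
  · intro hp
    have hp' : thetaC θ u * p.rep 0 ^ 2 + thetaC θ v * (p.rep 0 * p.rep 1)
        + thetaC θ w * p.rep 1 ^ 2 = 0 := hp
    rw [hfac] at hp'
    rcases mul_eq_zero.mp hp' with h1 | h1
    · left
      rw [← p.mk_rep]
      exact (linfac α β (vec2_ne_zero hab) p.rep hrep).mp h1
    · right
      rw [← p.mk_rep]
      exact (linfac γ δ (vec2_ne_zero hgd) p.rep hrep).mp h1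
  · intro hp
    show thetaC θ u * p.rep 0 ^ 2 + thetaC θ v * (p.rep 0 * p.rep 1)
      + thetaC θ w * p.rep 1 ^ 2 = 0
    rw [hfac]
    rcases hp with hp | hp
    · exact mul_eq_zero.mpr (Or.inl ((linfac α β (vec2_ne_zero hab) p.rep hrep).mpr
        (by rw [p.mk_rep]; exact hp)))
    · exact mul_eq_zero.mpr (Or.inr ((linfac γ δ (vec2_ne_zero hgd) p.rep hrep).mpr
        (by rw [p.mk_rep]; exact hp)))

lemma thetaC_reflect {d : ℕ} (a b : Fin d → ℝ) (c : ℝ) (z : Fin d → ℂ) :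
    thetaC (a - c • b) z = thetaC a z - (c : ℂ) * thetaC b z := by
  simp only [thetaC, Finset.mul_sum, ← Finset.sum_sub_distrib]
  refine Finset.sum_congr rfl fun i _ => ?_
  simp only [Pi.sub_apply, Pi.smul_apply, smul_eq_mul]
  push_cast
  ring

lemma thetaC_combo {d : ℕ} (θ : Fin d → ℝ) (u v w : Fin d → ℂ) (c1 c2 c3 : ℂ) :
    thetaC θ (c1 • u + c2 • v + c3 • w)
      = c1 * thetaC θ u + c2 * thetaC θ v + c3 * thetaC θ w := by
  simp only [thetaC, Finset.mul_sum, ← Finset.sum_add_distrib]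
  refine Finset.sum_congr rfl fun i _ => ?_
  simp only [Pi.add_apply, Pi.smul_apply, smul_eq_mul]
  ring

lemma span_kill {d : ℕ} (Φ : Finset (Fin d → ℝ))
    (hspan : Submodule.span ℝ (Φ : Set (Fin d → ℝ)) = ⊤)
    (n : Fin d → ℂ) (h : ∀ θ ∈ Φ, thetaC θ n = 0) : n = 0 := by
  let L : (Fin d → ℝ) →ₗ[ℝ] ℂ :=
    { toFun := fun θ => thetaC θ n
      map_add' := fun θ θ' => by
        simp only [thetaC, ← Finset.sum_add_distrib]
        refine Finset.sum_congr rfl fun i _ => ?_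
        simp only [Pi.add_apply]
        push_cast
        ring
      map_smul' := fun r θ => by
        simp only [thetaC, RingHom.id_apply]
        rw [Finset.smul_sum]
        refine Finset.sum_congr rfl fun i _ => ?_
        simp only [Pi.smul_apply, smul_eq_mul, Complex.real_smul]
        push_cast
        ring }
  have hker : Submodule.span ℝ (Φ : Set (Fin d → ℝ)) ≤ LinearMap.ker L := by
    rw [Submodule.span_le]
    intro θ hθ
    exact LinearMap.mem_ker.mpr (h θ hθ)
  rw [hspan, top_le_iff] at hker
  funext i
  have : L (Pi.single i 1) = 0 := by
    have := LinearMap.ker_eq_top.mp hker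
    rw [this]; rfl
  simpa [L, thetaC, Pi.single_apply, apply_ite (fun r : ℝ => (r : ℂ)), ite_mul,
    Finset.sum_ite_eq'] using this

def lineCond {d : ℕ} (u v w : Fin d → ℂ) (x y : Fin 2 → ℂ) (θ : Fin d → ℝ) (s : ℂ) : Prop :=
  thetaC θ u = s * (x 1 * y 1) ∧ thetaC θ v = -(s * (x 0 * y 1 + x 1 * y 0)) ∧
    thetaC θ w = s * (x 0 * y 0)

lemma lineCond_swap {d : ℕ} {u v w : Fin d → ℂ} {x y : Fin 2 → ℂ} {θ : Fin d → ℝ} {s : ℂ}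
    (h : lineCond u v w x y θ s) : lineCond u v w y x θ s := by
  obtain ⟨h1, h2, h3⟩ := h
  exact ⟨by rw [h1]; ring, by rw [h2]; ring, by rw [h3]; ring⟩

lemma eq_mk_coords (x : Fin 2 → ℂ) (hx : x ≠ 0) (α β : ℂ) (hb : ![β, -α] ≠ (0 : Fin 2 → ℂ))
    (h : Projectivization.mk ℂ ![β, -α] hb = Projectivization.mk ℂ x hx) :
    ∃ a : ℂ, a ≠ 0 ∧ β = a * x 0 ∧ α = -(a * x 1) := by
  obtain ⟨a, ha⟩ := (mk_eq_mk_iff ℂ _ _ hb hx).mp h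
  refine ⟨a, a.ne_zero, ?_, ?_⟩
  · have := congrFun ha 0
    simp only [Pi.smul_apply, Units.smul_def, smul_eq_mul] at this
    simpa using this.symm
  · have := congrFun ha 1
    simp only [Pi.smul_apply, Units.smul_def, smul_eq_mul] at this
    simp only [Matrix.cons_val_one, Matrix.head_cons, Matrix.cons_val_zero] at this
    linear_combination this

lemma coeffs_of_pair {d : ℕ} (u v w : Fin d → ℂ) (θ : Fin d → ℝ)
    (α β γ δ a b : ℂ) (x y : Fin 2 → ℂ)
    (hA : thetaC θ u = α * γ) (hB : thetaC θ v = α * δ + β * γ) (hC : thetaC θ w = β * δ)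
    (hα : α = -(a * x 1)) (hβ : β = a * x 0) (hγ : γ = -(b * y 1)) (hδ : δ = b * y 0) :
    lineCond u v w x y θ (a * b) := by
  refine ⟨?_, ?_, ?_⟩
  · rw [hA, hα, hγ]; ring
  · rw [hB, hα, hβ, hγ, hδ]; ring
  · rw [hC, hβ, hδ]; ring

lemma sixcase {d : ℕ} (u v w : Fin d → ℂ) (x y : Fin 2 → ℂ)
    (hD : x 0 * y 1 - x 1 * y 0 ≠ 0)
    (A B R : Fin d → ℝ) (c t s s' : ℂ) (hc : c ≠ 0) (ht : t ≠ 0) (hs : s ≠ 0)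
    (hA : lineCond u v w x y A t) (hB : lineCond u v w x x B s)
    (hR : lineCond u v w x x R s' ∨ lineCond u v w y y R s' ∨ lineCond u v w x y R s')
    (hlu : thetaC R u = thetaC A u - c * thetaC B u)
    (hlv : thetaC R v = thetaC A v - c * thetaC B v)
    (hlw : thetaC R w = thetaC A w - c * thetaC B w) : False := by
  obtain ⟨hA0, hA1, hA2⟩ := hA
  obtain ⟨hB0, hB1, hB2⟩ := hB
  rcases hR with hR | hR | hR
  · obtain ⟨hR0, hR1, hR2⟩ := hR
    have e0 : (-(c * s) - s') * (x 1 * x 1) + (0 : ℂ) * (y 1 * y 1) + t * (x 1 * y 1) = 0 := by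
      linear_combination hR0 - hlu - hA0 + c * hB0
    have e1 : (-(c * s) - s') * (x 0 * x 1 + x 1 * x 0) + (0 : ℂ) * (y 0 * y 1 + y 1 * y 0)
        + t * (x 0 * y 1 + x 1 * y 0) = 0 := by
      linear_combination -hR1 + hlv + hA1 - c * hB1
    have e2 : (-(c * s) - s') * (x 0 * x 0) + (0 : ℂ) * (y 0 * y 0) + t * (x 0 * y 0) = 0 := by
      linear_combination hR2 - hlw - hA2 + c * hB2
    exact ht (indep3 x y hD _ _ _ e0 e1 e2).2.2
  · obtain ⟨hR0, hR1, hR2⟩ := hR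
    have e0 : (-(c * s)) * (x 1 * x 1) + (-s') * (y 1 * y 1) + t * (x 1 * y 1) = 0 := by
      linear_combination hR0 - hlu - hA0 + c * hB0
    have e1 : (-(c * s)) * (x 0 * x 1 + x 1 * x 0) + (-s') * (y 0 * y 1 + y 1 * y 0)
        + t * (x 0 * y 1 + x 1 * y 0) = 0 := by
      linear_combination -hR1 + hlv + hA1 - c * hB1
    have e2 : (-(c * s)) * (x 0 * x 0) + (-s') * (y 0 * y 0) + t * (x 0 * y 0) = 0 := by
      linear_combination hR2 - hlw - hA2 + c * hB2
    exact ht (indep3 x y hD _ _ _ e0 e1 e2).2.2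
  · obtain ⟨hR0, hR1, hR2⟩ := hR
    have e0 : (-(c * s)) * (x 1 * x 1) + (0 : ℂ) * (y 1 * y 1) + (t - s') * (x 1 * y 1) = 0 := by
      linear_combination hR0 - hlu - hA0 + c * hB0
    have e1 : (-(c * s)) * (x 0 * x 1 + x 1 * x 0) + (0 : ℂ) * (y 0 * y 1 + y 1 * y 0)
        + (t - s') * (x 0 * y 1 + x 1 * y 0) = 0 := by
      linear_combination -hR1 + hlv + hA1 - c * hB1
    have e2 : (-(c * s)) * (x 0 * x 0) + (0 : ℂ) * (y 0 * y 0) + (t - s') * (x 0 * y 0) = 0 := by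
      linear_combination hR2 - hlw - hA2 + c * hB2
    have hr := (indep3 x y hD _ _ _ e0 e1 e2).1
    rw [neg_eq_zero] at hr
    exact (mul_ne_zero hc hs) hr

lemma dotR_self_ne_zero {d : ℕ} {b : Fin d → ℝ} (hb : b ≠ 0) : dotR b b ≠ 0 := by
  obtain ⟨i, hi⟩ := Function.ne_iff.mp hb
  have hpos : 0 < dotR b b := by
    refine Finset.sum_pos' (fun j _ => mul_self_nonneg _) ⟨i, Finset.mem_univ i, ?_⟩
    exact mul_self_pos.mpr hi
  exact ne_of_gt hpos


/-- With `Φ` reduced irreducible of rank `d ≥ 2` and `u, v, w ∈ ℂ^d`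
linearly independent with `(θ_ℂ(u), θ_ℂ(v), θ_ℂ(w)) ≠ 0` for every root: if every point of
`Z = ⋃_{θ∈Φ} Z(q_θ)` is transversal (witnessed by some `θ` with `q_θ(γ) = 0` and
`disc(q_θ) ≠ 0`), then `#Z ≥ 3`. -/
theorem stmt16 {d : ℕ} (hd : 2 ≤ d) (Φ : Finset (Fin d → ℝ))
    (hRS : IsRootSystem Φ) (hred : IsReducedRS Φ) (hirr : IsIrreducibleRS Φ)
    (u v w : Fin d → ℂ) (hli : LinearIndependent ℂ ![u, v, w])
    (hnz : ∀ θ ∈ Φ, ¬ (thetaC θ u = 0 ∧ thetaC θ v = 0 ∧ thetaC θ w = 0))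
    (htrans : ∀ γ ∈ ⋃ θ ∈ Φ, qZero u v w θ,
        ∃ θ ∈ Φ, γ ∈ qZero u v w θ ∧ discQ u v w θ ≠ 0) :
    3 ≤ (⋃ θ ∈ Φ, qZero u v w θ).ncard := by
  classical
  by_contra hcon
  push_neg at hcon
  -- Φ is nonempty
  have hΦne : Φ.Nonempty := by
    rcases Φ.eq_empty_or_nonempty with hE | h
    · exfalso
      have hspan := hRS.2.1
      rw [hE] at hspan
      simp only [Finset.coe_empty, Submodule.span_empty] at hspan
      haveI : NeZero d := ⟨by omega⟩
      exact absurd hspan bot_ne_top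
    · exact h
  -- Z is finite
  have hqfin : ∀ θ ∈ Φ, (qZero u v w θ).Finite := by
    intro θ hθ
    obtain ⟨α, β, γ, δ, hb, hd', -, -, -, -, hpair⟩ := qZero_pair u v w θ (hnz θ hθ)
    rw [hpair]
    exact (Set.finite_singleton _).insert _
  have hZfin : (⋃ θ ∈ Φ, qZero u v w θ).Finite := Set.Finite.biUnion Φ.finite_toSet hqfin
  -- there is a point of Z
  obtain ⟨θ0, hθ0⟩ := hΦne
  obtain ⟨α0, β0, γ0, δ0, hb0, hd0, -, -, -, -, hpair0⟩ := qZero_pair u v w θ0 (hnz θ0 hθ0)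
  have hγZ : Projectivization.mk ℂ ![β0, -α0] hb0 ∈ ⋃ θ ∈ Φ, qZero u v w θ :=
    Set.mem_iUnion₂.mpr ⟨θ0, hθ0, by rw [hpair0]; exact Set.mem_insert _ _⟩
  -- a transversal root θs and the two points p₁ ≠ p₂
  obtain ⟨θs, hθs, -, hdiscs⟩ := htrans _ hγZ
  obtain ⟨α, β, γ, δ, hb, hd', hAeq, hBeq, hCeq, hdisceq, hpairs⟩ :=
    qZero_pair u v w θs (hnz θs hθs)
  set p₁ : Projectivization ℂ (Fin 2 → ℂ) := Projectivization.mk ℂ ![β, -α] hb with hp₁def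
  set p₂ : Projectivization ℂ (Fin 2 → ℂ) := Projectivization.mk ℂ ![δ, -γ] hd' with hp₂def
  have hp12 : p₁ ≠ p₂ := by
    intro he
    apply hdiscs
    obtain ⟨a, ha0, h1, h2⟩ := eq_mk_coords ![δ, -γ] hd' α β hb he
    simp only [Matrix.cons_val_zero, Matrix.cons_val_one, Matrix.head_cons] at h1 h2
    rw [hdisceq, h1, h2]; ring
  have hp₁Z : p₁ ∈ ⋃ θ ∈ Φ, qZero u v w θ :=
    Set.mem_iUnion₂.mpr ⟨θs, hθs, by rw [hpairs]; exact Set.mem_insert _ _⟩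
  have hp₂Z : p₂ ∈ ⋃ θ ∈ Φ, qZero u v w θ :=
    Set.mem_iUnion₂.mpr ⟨θs, hθs, by rw [hpairs]; exact Set.mem_insert_of_mem _ rfl⟩
  -- Z = {p₁, p₂}
  have hsub : (⋃ θ ∈ Φ, qZero u v w θ) ⊆ {p₁, p₂} := by
    have hsub2 : ({p₁, p₂} : Set (Projectivization ℂ (Fin 2 → ℂ))) ⊆ ⋃ θ ∈ Φ, qZero u v w θ := by
      intro p hp
      rcases hp with rfl | hp
      · exact hp₁Z
      · rw [Set.mem_singleton_iff] at hp; subst hp; exact hp₂Z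
    have hle : (⋃ θ ∈ Φ, qZero u v w θ).ncard ≤ ({p₁, p₂} : Set _).ncard := by
      rw [Set.ncard_pair hp12]; omega
    exact (Set.eq_of_subset_of_ncard_le hsub2 hle hZfin).symm.subset
  -- coordinates
  have hx : p₁.rep ≠ 0 := p₁.rep_nonzero
  have hy : p₂.rep ≠ 0 := p₂.rep_nonzero
  have hD : p₁.rep 0 * p₂.rep 1 - p₁.rep 1 * p₂.rep 0 ≠ 0 := by
    intro h0
    apply hp12
    rw [← p₁.mk_rep, ← p₂.mk_rep]
    exact prop2 _ _ hx hy h0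
  -- trichotomy for every root
  have trich : ∀ θ ∈ Φ, ∃ s : ℂ, s ≠ 0 ∧
      (lineCond u v w p₁.rep p₁.rep θ s ∨ lineCond u v w p₂.rep p₂.rep θ s ∨
        lineCond u v w p₁.rep p₂.rep θ s) := by
    intro θ hθ
    obtain ⟨α', β', γ', δ', hb', hd'', hA', hB', hC', -, hpair'⟩ := qZero_pair u v w θ (hnz θ hθ)
    have hPm : Projectivization.mk ℂ ![β', -α'] hb' ∈ ({p₁, p₂} : Set _) :=
      hsub (Set.mem_iUnion₂.mpr ⟨θ, hθ, by rw [hpair']; exact Set.mem_insert _ _⟩)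
    have hQm : Projectivization.mk ℂ ![δ', -γ'] hd'' ∈ ({p₁, p₂} : Set _) :=
      hsub (Set.mem_iUnion₂.mpr ⟨θ, hθ, by rw [hpair']; exact Set.mem_insert_of_mem _ rfl⟩)
    have hmk1 : p₁ = Projectivization.mk ℂ p₁.rep hx := (Projectivization.mk_rep p₁).symm
    have hmk2 : p₂ = Projectivization.mk ℂ p₂.rep hy := (Projectivization.mk_rep p₂).symm
    rcases hPm with hP | hP
    · obtain ⟨a, ha, hβa, hαa⟩ := eq_mk_coords p₁.rep hx α' β' hb' (hP.trans hmk1)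
      rcases hQm with hQ | hQ
      · obtain ⟨b2, hb2, hδb, hγb⟩ := eq_mk_coords p₁.rep hx γ' δ' hd'' (hQ.trans hmk1)
        exact ⟨a * b2, mul_ne_zero ha hb2,
          Or.inl (coeffs_of_pair u v w θ α' β' γ' δ' a b2 _ _ hA' hB' hC' hαa hβa hγb hδb)⟩
      · rw [Set.mem_singleton_iff] at hQ
        obtain ⟨b2, hb2, hδb, hγb⟩ := eq_mk_coords p₂.rep hy γ' δ' hd'' (hQ.trans hmk2)
        exact ⟨a * b2, mul_ne_zero ha hb2,
          Or.inr (Or.inr (coeffs_of_pair u v w θ α' β' γ' δ' a b2 _ _ hA' hB' hC' hαa hβa hγb hδb))⟩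
    · rw [Set.mem_singleton_iff] at hP
      obtain ⟨a, ha, hβa, hαa⟩ := eq_mk_coords p₂.rep hy α' β' hb' (hP.trans hmk2)
      rcases hQm with hQ | hQ
      · obtain ⟨b2, hb2, hδb, hγb⟩ := eq_mk_coords p₁.rep hx γ' δ' hd'' (hQ.trans hmk1)
        exact ⟨a * b2, mul_ne_zero ha hb2, Or.inr (Or.inr (lineCond_swap
          (coeffs_of_pair u v w θ α' β' γ' δ' a b2 _ _ hA' hB' hC' hαa hβa hγb hδb)))⟩
      · rw [Set.mem_singleton_iff] at hQ
        obtain ⟨b2, hb2, hδb, hγb⟩ := eq_mk_coords p₂.rep hy γ' δ' hd'' (hQ.trans hmk2)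
        exact ⟨a * b2, mul_ne_zero ha hb2,
          Or.inr (Or.inl (coeffs_of_pair u v w θ α' β' γ' δ' a b2 _ _ hA' hB' hC' hαa hβa hγb hδb))⟩
  -- θs lies on the (p₁,p₂)-line
  have hθsA : ∃ s : ℂ, s ≠ 0 ∧ lineCond u v w p₁.rep p₂.rep θs s := by
    have hmk1 : p₁ = Projectivization.mk ℂ p₁.rep hx := (Projectivization.mk_rep p₁).symm
    have hmk2 : p₂ = Projectivization.mk ℂ p₂.rep hy := (Projectivization.mk_rep p₂).symm
    obtain ⟨a, ha, hβa, hαa⟩ := eq_mk_coords p₁.rep hx α β hb (hp₁def.symm.trans hmk1)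
    obtain ⟨b2, hb2, hδb, hγb⟩ := eq_mk_coords p₂.rep hy γ δ hd' (hp₂def.symm.trans hmk2)
    exact ⟨a * b2, mul_ne_zero ha hb2,
      coeffs_of_pair u v w θs α β γ δ a b2 _ _ hAeq hBeq hCeq hαa hβa hγb hδb⟩
  -- the irreducibility argument
  set P : (Fin d → ℝ) → Prop := fun θ => ∃ s : ℂ, s ≠ 0 ∧ lineCond u v w p₁.rep p₂.rep θ s
    with hPdef
  have horth : ∀ a ∈ {θ | θ ∈ Φ ∧ P θ}, ∀ b ∈ {θ | θ ∈ Φ ∧ ¬ P θ}, dotR a b = 0 := by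
    intro a ha b hbm
    by_contra hdot
    obtain ⟨haΦ, t, ht, hlc⟩ := ha
    obtain ⟨hbΦ, hnP⟩ := hbm
    obtain ⟨s, hs, hcase⟩ := trich b hbΦ
    have hbb : dotR b b ≠ 0 := dotR_self_ne_zero (hRS.1 b hbΦ)
    have hc : (2 * dotR a b / dotR b b) ≠ 0 :=
      div_ne_zero (mul_ne_zero two_ne_zero hdot) hbb
    have hcC : ((2 * dotR a b / dotR b b : ℝ) : ℂ) ≠ 0 := Complex.ofReal_ne_zero.mpr hc
    have hrΦ : a - (2 * dotR a b / dotR b b) • b ∈ Φ := hRS.2.2.1 b hbΦ a haΦ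
    obtain ⟨s', hs', hRcase⟩ := trich _ hrΦ
    have hlu := thetaC_reflect a b (2 * dotR a b / dotR b b) u
    have hlv := thetaC_reflect a b (2 * dotR a b / dotR b b) v
    have hlw := thetaC_reflect a b (2 * dotR a b / dotR b b) w
    rcases hcase with hxx | hyy | hxy
    · exact sixcase u v w p₁.rep p₂.rep hD a b _ _ t s s' hcC ht hs hlc hxx hRcase hlu hlv hlw
    · have hD' : p₂.rep 0 * p₁.rep 1 - p₂.rep 1 * p₁.rep 0 ≠ 0 := by
        intro h0; apply hD; linear_combination -h0
      refine sixcase u v w p₂.rep p₁.rep hD' a b _ _ t s s' hcC ht hs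
        (lineCond_swap hlc) hyy ?_ hlu hlv hlw
      rcases hRcase with h | h | h
      · exact Or.inr (Or.inl h)
      · exact Or.inl h
      · exact Or.inr (Or.inr (lineCond_swap h))
    · exact hnP ⟨s, hs, hxy⟩
  have hcover : (Φ : Set (Fin d → ℝ)) = {θ | θ ∈ Φ ∧ P θ} ∪ {θ | θ ∈ Φ ∧ ¬ P θ} := by
    ext θ
    simp only [Set.mem_union, Set.mem_setOf_eq, Finset.mem_coe]
    constructor
    · intro hθ
      by_cases hP : P θ
      · exact Or.inl ⟨hθ, hP⟩
      · exact Or.inr ⟨hθ, hP⟩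
    · rintro (⟨h, -⟩ | ⟨h, -⟩) <;> exact h
  have hdisj : Disjoint {θ | θ ∈ Φ ∧ P θ} {θ | θ ∈ Φ ∧ ¬ P θ} := by
    rw [Set.disjoint_left]
    rintro θ ⟨-, hP'⟩ ⟨-, hnP'⟩
    exact hnP' hP'
  rcases hirr _ _ hcover hdisj horth with hA0 | hB0
  · have : θs ∈ ({θ | θ ∈ Φ ∧ P θ} : Set (Fin d → ℝ)) := ⟨hθs, hθsA⟩
    rw [hA0] at this
    exact this
  · -- every root lies on the (p₁,p₂)-line; contradiction with linear independence
    have hall : ∀ θ ∈ Φ, P θ := by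
      intro θ hθ
      by_contra hnot
      have : θ ∈ ({θ | θ ∈ Φ ∧ ¬ P θ} : Set (Fin d → ℝ)) := ⟨hθ, hnot⟩
      rw [hB0] at this
      exact this
    set K0 : ℂ := p₁.rep 1 * p₂.rep 1 with hK0def
    set K1 : ℂ := p₁.rep 0 * p₂.rep 1 + p₁.rep 1 * p₂.rep 0 with hK1def
    set K2 : ℂ := p₁.rep 0 * p₂.rep 0 with hK2def
    -- choose a covector μ killing (K0, -K1, K2)
    obtain ⟨μ0, μ1, μ2, hμne, hμorth⟩ :
        ∃ μ0 μ1 μ2 : ℂ, ¬ (μ0 = 0 ∧ μ1 = 0 ∧ μ2 = 0) ∧ μ0 * K0 - μ1 * K1 + μ2 * K2 = 0 := by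
      by_cases hK0 : K0 = 0
      · have hK12 : ¬ (K1 = 0 ∧ K2 = 0) := by
          rintro ⟨h1, h2⟩
          obtain ⟨s, hs, h3, h4, h5⟩ := hθsA
          exact hnz θs hθs ⟨by rw [h3, ← hK0def, hK0, mul_zero],
            by rw [h4, ← hK1def, h1, mul_zero, neg_zero],
            by rw [h5, ← hK2def, h2, mul_zero]⟩
        refine ⟨0, K2, K1, ?_, by ring⟩
        rintro ⟨-, h1, h2⟩
        exact hK12 ⟨h2, h1⟩
      · exact ⟨K1, K0, 0, fun h => hK0 h.2.1, by ring⟩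
    have hnzero : (μ0 • u + μ1 • v + μ2 • w : Fin d → ℂ) = 0 := by
      refine span_kill Φ hRS.2.1 _ (fun θ hθ => ?_)
      obtain ⟨s, hs, h3, h4, h5⟩ := hall θ hθ
      rw [thetaC_combo, h3, h4, h5, ← hK0def, ← hK1def, ← hK2def]
      linear_combination s * hμorth
    have := Fintype.linearIndependent_iff.mp hli ![μ0, μ1, μ2] (by
      rw [Fin.sum_univ_three]
      simpa using hnzero)
    apply hμne
    exact ⟨this 0, this 1, this 2⟩

end
end

section
/- Let Φ be a reduced irreducible root system in ℝ^d with d ≥ 2, and let u, v, w ∈ ℂ^d be linearly independent over ℂ with (θ_ℂ(u), θ_ℂ(v), θ_ℂ(w)) ≠ (0,0,0) for every θ ∈ Φ. If the set Z := ⋃_{θ∈Φ} Z(q_θ) contains exactly two transversal points, then Z contains at least two tangential points. -/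
noncomputable section

namespace S17


abbrev P1 := Projectivization ℂ (Fin 2 → ℂ)

/-- value of binary quadratic on a vector -/
def qv (A B C : ℂ) (x : Fin 2 → ℂ) : ℂ := A * x 0 ^ 2 + B * (x 0 * x 1) + C * x 1 ^ 2

def cr (x y : Fin 2 → ℂ) : ℂ := x 0 * y 1 - x 1 * y 0

lemma qv_smul (A B C c : ℂ) (x : Fin 2 → ℂ) : qv A B C (c • x) = c ^ 2 * qv A B C x := by
  simp only [qv, Pi.smul_apply, smul_eq_mul]; ring

lemma vec_ne_zero {a b : ℂ} (h : ¬(a = 0 ∧ b = 0)) : ![a, b] ≠ 0 := by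
  intro h0
  exact h ⟨by simpa using congrFun h0 0, by simpa using congrFun h0 1⟩

lemma ne_zero_pair (x : Fin 2 → ℂ) (hx : x ≠ 0) : ¬(x 0 = 0 ∧ x 1 = 0) := by
  rintro ⟨h0, h1⟩
  apply hx
  ext i
  fin_cases i <;> simpa

lemma mem_qZero_iff {d : ℕ} (u v w : Fin d → ℂ) (θ : Fin d → ℝ) (p : P1) :
    p ∈ qZero u v w θ ↔ qv (thetaC θ u) (thetaC θ v) (thetaC θ w) p.rep = 0 := Iff.rfl

lemma mk_mem_qZero_iff {d : ℕ} (u v w : Fin d → ℂ) (θ : Fin d → ℝ) (x : Fin 2 → ℂ)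
    (hx : x ≠ 0) :
    Projectivization.mk ℂ x hx ∈ qZero u v w θ ↔
      qv (thetaC θ u) (thetaC θ v) (thetaC θ w) x = 0 := by
  obtain ⟨c, hc⟩ := (Projectivization.mk_eq_mk_iff ℂ _ _
      (Projectivization.rep_nonzero _) hx).mp (Projectivization.mk_rep _)
  rw [mem_qZero_iff, ← hc]
  rw [show (c : ℂˣ) • x = (c : ℂ) • x from rfl, qv_smul]
  constructor
  · intro h
    rcases mul_eq_zero.mp h with h | h
    · exact absurd (pow_eq_zero_iff (n := 2) (by norm_num) |>.mp h) c.ne_zero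
    · exact h
  · intro h; rw [h, mul_zero]

lemma cr_swap (x y : Fin 2 → ℂ) : cr x y = - cr y x := by simp [cr]; ring

lemma mk_eq_mk_iff_cr (x y : Fin 2 → ℂ) (hx : x ≠ 0) (hy : y ≠ 0) :
    Projectivization.mk ℂ x hx = Projectivization.mk ℂ y hy ↔ cr x y = 0 := by
  rw [Projectivization.mk_eq_mk_iff]
  constructor
  · rintro ⟨c, rfl⟩
    simp only [cr, Pi.smul_apply, smul_eq_mul, Units.smul_def]
    ring
  · intro h
    have h' : x 0 * y 1 = x 1 * y 0 := by
      have := h; simp only [cr, sub_eq_zero] at this; exact this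
    rcases ne_or_eq (y 0) 0 with hy0 | hy0
    · refine ⟨Units.mk0 (x 0 / y 0) ?_, ?_⟩
      · intro h0
        have hx0 : x 0 = 0 := by
          field_simp at h0; simpa using h0
        have hx1 : x 1 = 0 := by
          have h2 : x 1 * y 0 = 0 := by rw [← h', hx0, zero_mul]
          exact (mul_eq_zero.mp h2).resolve_right hy0
        exact hx (funext fun i => by fin_cases i <;> simp [hx0, hx1])
      · ext i
        fin_cases i
        · show x 0 / y 0 * y 0 = x 0
          field_simp
        · show x 0 / y 0 * y 1 = x 1
          rw [div_mul_eq_mul_div, h', mul_div_assoc, div_self hy0, mul_one]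
    · have hy1 : y 1 ≠ 0 := by
        intro h1
        exact hy (funext fun i => by fin_cases i <;> simp [hy0, h1])
      have hx0 : x 0 = 0 := by
        have h2 : x 0 * y 1 = 0 := by rw [h', hy0, mul_zero]
        exact (mul_eq_zero.mp h2).resolve_right hy1
      refine ⟨Units.mk0 (x 1 / y 1) ?_, ?_⟩
      · intro h0
        have hx1 : x 1 = 0 := by field_simp at h0; simpa using h0
        exact hx (funext fun i => by fin_cases i <;> simp [hx0, hx1])
      · ext i
        fin_cases i
        · show x 1 / y 1 * y 0 = x 0
          rw [hy0, hx0, mul_zero]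
        · show x 1 / y 1 * y 1 = x 1
          field_simp

/-- structure of a quadratic with zero discriminant at a zero -/
lemma Ldouble (A B C a b : ℂ) (hab : ¬(a = 0 ∧ b = 0)) (hd : B ^ 2 - 4 * A * C = 0)
    (hz : A * a ^ 2 + B * (a * b) + C * b ^ 2 = 0) :
    ∃ t, A = t * b ^ 2 ∧ B = -(2 * t * (a * b)) ∧ C = t * a ^ 2 := by
  by_cases hb : b = 0
  · have ha : a ≠ 0 := fun h => hab ⟨h, hb⟩
    have hA : A = 0 := by
      have : A * a ^ 2 = 0 := by rw [hb] at hz; linear_combination hz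
      exact (mul_eq_zero.mp this).resolve_right (pow_ne_zero 2 ha)
    have hB : B = 0 := by
      have : B ^ 2 = 0 := by rw [hA] at hd; linear_combination hd
      exact pow_eq_zero_iff (by norm_num) |>.mp this
    exact ⟨C / a ^ 2, by rw [hA, hb]; ring, by rw [hB, hb]; ring, by field_simp⟩
  · have key : 2 * A * a + B * b = 0 := by
      have h2 : (2 * A * a + B * b) ^ 2 = 0 := by linear_combination 4 * A * hz + b ^ 2 * hd
      exact pow_eq_zero_iff (by norm_num) |>.mp h2
    refine ⟨A / b ^ 2, by field_simp, ?_, ?_⟩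
    · field_simp
      linear_combination key
    · have hC : C * b ^ 2 = A * a ^ 2 := by linear_combination hz - a * key
      field_simp
      linear_combination hC

/-- a quadratic vanishing at three pairwise distinct points is zero -/
lemma Lthree (A B C a1 b1 a2 b2 a3 b3 : ℂ)
    (h12 : a1 * b2 - a2 * b1 ≠ 0) (h13 : a1 * b3 - a3 * b1 ≠ 0) (h23 : a2 * b3 - a3 * b2 ≠ 0)
    (h1 : A * a1 ^ 2 + B * (a1 * b1) + C * b1 ^ 2 = 0)
    (h2 : A * a2 ^ 2 + B * (a2 * b2) + C * b2 ^ 2 = 0)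
    (h3 : A * a3 ^ 2 + B * (a3 * b3) + C * b3 ^ 2 = 0) :
    A = 0 ∧ B = 0 ∧ C = 0 := by
  have hP : (a1 * b2 - a2 * b1) * ((a1 * b3 - a3 * b1) * (a2 * b3 - a3 * b2)) ≠ 0 :=
    mul_ne_zero h12 (mul_ne_zero h13 h23)
  refine ⟨?_, ?_, ?_⟩
  · have : ((a1 * b2 - a2 * b1) * ((a1 * b3 - a3 * b1) * (a2 * b3 - a3 * b2))) * A = 0 := by
      linear_combination (b2 * b3 * (a2 * b3 - a3 * b2)) * h1
        - (b1 * b3 * (a1 * b3 - a3 * b1)) * h2 + (b1 * b2 * (a1 * b2 - a2 * b1)) * h3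
    exact (mul_eq_zero.mp this).resolve_left hP
  · have : ((a1 * b2 - a2 * b1) * ((a1 * b3 - a3 * b1) * (a2 * b3 - a3 * b2))) * B = 0 := by
      linear_combination (-((a2 * b3 - a3 * b2) * (a2 * b3 + a3 * b2))) * h1
        + ((a1 * b3 - a3 * b1) * (a1 * b3 + a3 * b1)) * h2
        - ((a1 * b2 - a2 * b1) * (a1 * b2 + a2 * b1)) * h3
    exact (mul_eq_zero.mp this).resolve_left hP
  · have : ((a1 * b2 - a2 * b1) * ((a1 * b3 - a3 * b1) * (a2 * b3 - a3 * b2))) * C = 0 := by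
      linear_combination (a2 * a3 * (a2 * b3 - a3 * b2)) * h1
        - (a1 * a3 * (a1 * b3 - a3 * b1)) * h2 + (a1 * a2 * (a1 * b2 - a2 * b1)) * h3
    exact (mul_eq_zero.mp this).resolve_left hP

/-- injectivity of the coordinate functionals (G,H,F) -/
lemma Linj (A B C a1 b1 a2 b2 : ℂ) (hD : a1 * b2 - a2 * b1 ≠ 0)
    (h1 : A * a1 ^ 2 + B * (a1 * b1) + C * b1 ^ 2 = 0)
    (h2 : 2 * A * (a1 * a2) + B * (a1 * b2 + a2 * b1) + 2 * C * (b1 * b2) = 0)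
    (h3 : A * a2 ^ 2 + B * (a2 * b2) + C * b2 ^ 2 = 0) :
    A = 0 ∧ B = 0 ∧ C = 0 := by
  have hD2 : (a1 * b2 - a2 * b1) ^ 2 ≠ 0 := pow_ne_zero 2 hD
  refine ⟨?_, ?_, ?_⟩
  · have : (a1 * b2 - a2 * b1) ^ 2 * A = 0 := by
      linear_combination b2 ^ 2 * h1 - b1 * b2 * h2 + b1 ^ 2 * h3
    exact (mul_eq_zero.mp this).resolve_left hD2
  · have : (a1 * b2 - a2 * b1) ^ 2 * B = 0 := by
      linear_combination (-(2 * a2 * b2)) * h1 + (a1 * b2 + a2 * b1) * h2 - 2 * a1 * b1 * h3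
    exact (mul_eq_zero.mp this).resolve_left hD2
  · have : (a1 * b2 - a2 * b1) ^ 2 * C = 0 := by
      linear_combination a2 ^ 2 * h1 - a1 * a2 * h2 + a1 ^ 2 * h3
    exact (mul_eq_zero.mp this).resolve_left hD2

/-- a nonzero quadratic has a projective zero -/
lemma Lroot (A B C : ℂ) :
    ∃ a b : ℂ, ¬(a = 0 ∧ b = 0) ∧ A * a ^ 2 + B * (a * b) + C * b ^ 2 = 0 := by
  by_cases hA : A = 0
  · exact ⟨1, 0, fun h => one_ne_zero h.1, by rw [hA]; ring⟩
  · obtain ⟨s, hs⟩ := IsAlgClosed.exists_pow_nat_eq (B ^ 2 - 4 * A * C) (n := 2) (by norm_num)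
    refine ⟨-B + s, 2 * A, fun h => hA (by simpa using h.2), ?_⟩
    linear_combination A * hs

/-- second zero of a quadratic with nonzero discriminant -/
lemma Lpartner (A B C a b : ℂ) (hab : ¬(a = 0 ∧ b = 0)) (hd : B ^ 2 - 4 * A * C ≠ 0)
    (hz : A * a ^ 2 + B * (a * b) + C * b ^ 2 = 0) :
    ∃ a' b' : ℂ, ¬(a' = 0 ∧ b' = 0) ∧ A * a' ^ 2 + B * (a' * b') + C * b' ^ 2 = 0 ∧
      a * b' - b * a' ≠ 0 := by
  by_cases hA : A = 0
  · have hB : B ≠ 0 := by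
      intro h; apply hd; rw [hA, h]; ring
    by_cases hb : b = 0
    · have ha : a ≠ 0 := fun h => hab ⟨h, hb⟩
      refine ⟨-C, B, fun h => hB h.2, by rw [hA]; ring, ?_⟩
      rw [hb]; simpa using mul_ne_zero ha hB
    · refine ⟨1, 0, fun h => one_ne_zero h.1, by rw [hA]; ring, ?_⟩
      simpa using hb
  · have hb : b ≠ 0 := by
      intro h
      rw [h] at hz
      have : A * a ^ 2 = 0 := by linear_combination hz
      have ha : a ≠ 0 := fun h' => hab ⟨h', h⟩
      exact hA ((mul_eq_zero.mp this).resolve_right (pow_ne_zero 2 ha))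
    refine ⟨-(B * b) - A * a, A * b, fun h => hA (by
      rcases mul_eq_zero.mp h.2 with h' | h'
      exacts [h', absurd h' hb]), by linear_combination A ^ 2 * hz, ?_⟩
    intro hc
    have hc' : 2 * A * a + B * b = 0 := by
      have : b * (2 * A * a + B * b) = 0 := by linear_combination hc
      exact (mul_eq_zero.mp this).resolve_left hb
    apply hd
    have : (B ^ 2 - 4 * A * C) * b ^ 2 = 0 := by
      linear_combination (2 * A * a + B * b) * hc' - 4 * A * hz
    exact (mul_eq_zero.mp this).resolve_right (pow_ne_zero 2 hb)

lemma dotR_comm {d : ℕ} (x y : Fin d → ℝ) : dotR x y = dotR y x := by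
  simp [dotR, mul_comm]

lemma dotR_self_ne_zero {d : ℕ} (x : Fin d → ℝ) (hx : x ≠ 0) : dotR x x ≠ 0 := by
  have h : 0 < dotR x x := by
    obtain ⟨i, hi⟩ := Function.ne_iff.mp hx
    refine Finset.sum_pos' (fun j _ => mul_self_nonneg (x j)) ⟨i, Finset.mem_univ i, ?_⟩
    exact mul_self_pos.mpr hi
  exact ne_of_gt h

lemma dotR_add_left {d : ℕ} (x y z : Fin d → ℝ) : dotR (x + y) z = dotR x z + dotR y z := by
  simp [dotR, add_mul, Finset.sum_add_distrib]

lemma dotR_smul_left {d : ℕ} (r : ℝ) (x z : Fin d → ℝ) : dotR (r • x) z = r * dotR x z := by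
  simp [dotR, Finset.mul_sum, mul_assoc]

lemma dotR_single {d : ℕ} (i : Fin d) (z : Fin d → ℝ) : dotR (Pi.single i 1) z = z i := by
  simp [dotR]
  rw [Finset.sum_eq_single i]
  · simp
  · intro j _ hj
    simp [Pi.single_apply, hj]
  · intro h; exact absurd (Finset.mem_univ i) h

lemma thetaC_sub_smul {d : ℕ} (α β : Fin d → ℝ) (k : ℝ) (z : Fin d → ℂ) :
    thetaC (β - k • α) z = thetaC β z - (k : ℂ) * thetaC α z := by
  simp only [thetaC, Pi.sub_apply, Pi.smul_apply, smul_eq_mul, Finset.mul_sum]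
  rw [← Finset.sum_sub_distrib]
  refine Finset.sum_congr rfl fun i _ => ?_
  push_cast
  ring

lemma thetaC_comb {d : ℕ} (θ : Fin d → ℝ) (c₁ c₂ c₃ : ℂ) (u v w : Fin d → ℂ) :
    thetaC θ (c₁ • u + c₂ • v + c₃ • w)
      = c₁ * thetaC θ u + c₂ * thetaC θ v + c₃ * thetaC θ w := by
  simp only [thetaC, Pi.add_apply, Pi.smul_apply, smul_eq_mul, Finset.mul_sum]
  rw [← Finset.sum_add_distrib, ← Finset.sum_add_distrib]
  refine Finset.sum_congr rfl fun i _ => ?_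
  ring

lemma thetaC_re {d : ℕ} (θ : Fin d → ℝ) (z : Fin d → ℂ) :
    (thetaC θ z).re = dotR θ (fun i => (z i).re) := by
  simp [thetaC, dotR, Complex.re_sum, Complex.mul_re]

lemma thetaC_im {d : ℕ} (θ : Fin d → ℝ) (z : Fin d → ℂ) :
    (thetaC θ z).im = dotR θ (fun i => (z i).im) := by
  simp [thetaC, dotR, Complex.im_sum, Complex.mul_im]

/-- if every root of a spanning set kills `z`, then `z = 0` -/
lemma span_dot_zero {d : ℕ} (Φ : Finset (Fin d → ℝ))
    (hspan : Submodule.span ℝ ((Φ : Set (Fin d → ℝ))) = ⊤)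
    (z : Fin d → ℂ) (hz : ∀ θ ∈ Φ, thetaC θ z = 0) : z = 0 := by
  have key : ∀ y : Fin d → ℝ, (∀ θ ∈ Φ, dotR θ y = 0) → y = 0 := by
    intro y hy
    have hall : ∀ x : Fin d → ℝ, dotR x y = 0 := by
      intro x
      have hx : x ∈ Submodule.span ℝ ((Φ : Set (Fin d → ℝ))) := by rw [hspan]; trivial
      refine Submodule.span_induction (fun a ha => hy a ha) ?_ ?_ ?_ hx
      · simp [dotR]
      · intro a b _ _ ha hb; rw [dotR_add_left, ha, hb, add_zero]
      · intro r a _ ha; rw [dotR_smul_left, ha, mul_zero]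
    ext i
    have := hall (Pi.single i 1)
    rwa [dotR_single] at this
  have hre : (fun i => (z i).re) = 0 := by
    refine key _ fun θ hθ => ?_
    rw [← thetaC_re, hz θ hθ, Complex.zero_re]
  have him : (fun i => (z i).im) = 0 := by
    refine key _ fun θ hθ => ?_
    rw [← thetaC_im, hz θ hθ, Complex.zero_im]
  funext i
  have h1 := congrFun hre i
  have h2 := congrFun him i
  simp only [Pi.zero_apply] at h1 h2 ⊢
  exact Complex.ext h1 h2

/-- nonzero combination with linearly independent `u,v,w` -/
lemma comb_ne_zero {d : ℕ} (u v w : Fin d → ℂ) (hli : LinearIndependent ℂ ![u, v, w])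
    (c₁ c₂ c₃ : ℂ) (hc : ¬(c₁ = 0 ∧ c₂ = 0 ∧ c₃ = 0)) :
    c₁ • u + c₂ • v + c₃ • w ≠ 0 := by
  intro h0
  have := Fintype.linearIndependent_iff.mp hli ![c₁, c₂, c₃] (by
    rw [Fin.sum_univ_three]
    simpa using h0)
  exact hc ⟨this 0, this 1, this 2⟩

lemma Lpar (a b a3 b3 : ℂ) (h3 : ¬(a3 = 0 ∧ b3 = 0)) (hpar : a * b3 - b * a3 = 0) :
    ∃ l : ℂ, a = l * a3 ∧ b = l * b3 := by
  by_cases ha3 : a3 = 0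
  · have hb3 : b3 ≠ 0 := fun h => h3 ⟨ha3, h⟩
    have ha : a = 0 := by
      have : a * b3 = 0 := by rw [ha3] at hpar; linear_combination hpar
      exact (mul_eq_zero.mp this).resolve_right hb3
    exact ⟨b / b3, by rw [ha, ha3, mul_zero], by field_simp⟩
  · refine ⟨a / a3, by field_simp, ?_⟩
    field_simp
    linear_combination -hpar

/-- possible coordinate profiles of roots -/
def Pq (s₁ s₂ G H F : ℂ) : Prop :=
  (G = 0 ∧ F = 0) ∨ (G = 0 ∧ H = 0) ∨ (H = 0 ∧ F = 0) ∨
    ∃ t : ℂ, G = t * s₁ ^ 2 ∧ H = 2 * t * (s₁ * s₂) ∧ F = t * s₂ ^ 2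

lemma Lortho (s₁ s₂ G H F H2 : ℂ) (hs₁ : s₁ ≠ 0) (hs₂ : s₂ ≠ 0) (hne : H2 ≠ H)
    (hβ : Pq s₁ s₂ G H F) (hβnT0 : ¬(G = 0 ∧ F = 0)) (hβnz : ¬(G = 0 ∧ H = 0 ∧ F = 0))
    (hβ' : Pq s₁ s₂ G H2 F) : False := by
  have hs₁2 : s₁ ^ 2 ≠ 0 := pow_ne_zero 2 hs₁
  have hs₂2 : s₂ ^ 2 ≠ 0 := pow_ne_zero 2 hs₂
  rcases hβ with h | ⟨hG, hH⟩ | ⟨hH, hF⟩ | ⟨t, hG, hH, hF⟩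
  · exact hβnT0 h
  · -- type 1 : G = 0, H = 0, F ≠ 0
    have hF : F ≠ 0 := fun h => hβnT0 ⟨hG, h⟩
    rcases hβ' with ⟨_, h⟩ | ⟨_, h⟩ | ⟨_, h⟩ | ⟨t, hG', hH', hF'⟩
    · exact hF h
    · exact hne (h.trans hH.symm)
    · exact hF h
    · have ht : t = 0 := by
        have : t * s₁ ^ 2 = 0 := by rw [← hG', hG]
        exact (mul_eq_zero.mp this).resolve_right hs₁2
      rw [ht, zero_mul] at hF'
      exact hF hF'
  · -- type 2 : H = 0, F = 0, G ≠ 0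
    have hG : G ≠ 0 := fun h => hβnT0 ⟨h, hF⟩
    rcases hβ' with ⟨h, _⟩ | ⟨h, _⟩ | ⟨h, _⟩ | ⟨t, hG', hH', hF'⟩
    · exact hG h
    · exact hG h
    · exact hne (h.trans hH.symm)
    · have ht : t = 0 := by
        have : t * s₂ ^ 2 = 0 := by rw [← hF', hF]
        exact (mul_eq_zero.mp this).resolve_right hs₂2
      rw [ht, zero_mul] at hG'
      exact hG hG'
  · -- type 3
    have ht : t ≠ 0 := by
      intro h
      rw [h] at hG hH hF
      exact hβnz ⟨by simpa using hG, by simpa using hH, by simpa using hF⟩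
    have hGne : G ≠ 0 := by rw [hG]; exact mul_ne_zero ht hs₁2
    have hFne : F ≠ 0 := by rw [hF]; exact mul_ne_zero ht hs₂2
    rcases hβ' with ⟨h, _⟩ | ⟨h, _⟩ | ⟨_, h⟩ | ⟨t', hG', hH', hF'⟩
    · exact hGne h
    · exact hGne h
    · exact hFne h
    · have htt : t' = t := by
        have : t * s₁ ^ 2 = t' * s₁ ^ 2 := hG ▸ hG'
        exact (mul_right_cancel₀ hs₁2 this).symm
      rw [htt] at hH'
      exact hne (hH'.trans hH.symm)

lemma qv_lin {d : ℕ} (α β : Fin d → ℝ) (k : ℝ) (u v w : Fin d → ℂ) (x : Fin 2 → ℂ) :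
    qv (thetaC (β - k • α) u) (thetaC (β - k • α) v) (thetaC (β - k • α) w) x
      = qv (thetaC β u) (thetaC β v) (thetaC β w) x
        - (k : ℂ) * qv (thetaC α u) (thetaC α v) (thetaC α w) x := by
  rw [thetaC_sub_smul, thetaC_sub_smul, thetaC_sub_smul]
  simp only [qv]; ring

lemma hv_lin {d : ℕ} (α β : Fin d → ℝ) (k : ℝ) (u v w : Fin d → ℂ) (m1 m2 m3 : ℂ) :
    2 * thetaC (β - k • α) u * m1 + thetaC (β - k • α) v * m2 + 2 * thetaC (β - k • α) w * m3
      = (2 * thetaC β u * m1 + thetaC β v * m2 + 2 * thetaC β w * m3)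
        - (k : ℂ) * (2 * thetaC α u * m1 + thetaC α v * m2 + 2 * thetaC α w * m3) := by
  rw [thetaC_sub_smul, thetaC_sub_smul, thetaC_sub_smul]
  ring

end S17

/-- With `Φ` reduced irreducible of rank `d ≥ 2` and `u, v, w ∈ ℂ^d`
linearly independent with `(θ_ℂ(u), θ_ℂ(v), θ_ℂ(w)) ≠ 0` for every root: if
`Z = ⋃_{θ∈Φ} Z(q_θ)` contains exactly two transversal points, then it contains at least two
tangential points. -/
theorem stmt17 {d : ℕ} (hd : 2 ≤ d) (Φ : Finset (Fin d → ℝ))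
    (hRS : IsRootSystem Φ) (hred : IsReducedRS Φ) (hirr : IsIrreducibleRS Φ)
    (u v w : Fin d → ℂ) (hli : LinearIndependent ℂ ![u, v, w])
    (hnz : ∀ θ ∈ Φ, ¬ (thetaC θ u = 0 ∧ thetaC θ v = 0 ∧ thetaC θ w = 0))
    (htwo : {γ ∈ ⋃ θ ∈ Φ, qZero u v w θ |
        ∃ θ ∈ Φ, γ ∈ qZero u v w θ ∧ discQ u v w θ ≠ 0}.ncard = 2) :
    2 ≤ {γ ∈ ⋃ θ ∈ Φ, qZero u v w θ |
        ∀ θ ∈ Φ, γ ∈ qZero u v w θ → discQ u v w θ = 0}.ncard := by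
  classical
  obtain ⟨hne0, hspan, hrefl, -⟩ := hRS
  by_contra hcon
  push_neg at hcon
  have hcon1 := Nat.lt_succ_iff.mp hcon
  -- finiteness of each zero set
  have hqfin : ∀ θ ∈ Φ, (qZero u v w θ).Finite := by
    intro θ hθ
    by_cases hdisc : discQ u v w θ = 0
    · apply Set.Subsingleton.finite
      intro p hp q hq
      rw [S17.mem_qZero_iff] at hp hq
      obtain ⟨t, hA, hB, hC⟩ := S17.Ldouble _ _ _ _ _
        (S17.ne_zero_pair p.rep p.rep_nonzero) hdisc hp
      have ht : t ≠ 0 := by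
        intro h
        rw [h] at hA hB hC
        exact hnz θ hθ ⟨by simpa using hA, by simpa using hB, by simpa using hC⟩
      have hcr : S17.cr q.rep p.rep = 0 := by
        have h2 : t * (S17.cr q.rep p.rep) ^ 2 = 0 := by
          rw [hA, hB, hC] at hq
          simp only [S17.qv, S17.cr] at hq ⊢
          linear_combination hq
        have h3 := (mul_eq_zero.mp h2).resolve_left ht
        exact pow_eq_zero_iff (by norm_num) |>.mp h3
      have h4 := (S17.mk_eq_mk_iff_cr q.rep p.rep q.rep_nonzero p.rep_nonzero).mpr hcr
      rw [Projectivization.mk_rep, Projectivization.mk_rep] at h4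
      exact h4.symm
    · obtain ⟨a, b, hab, hz⟩ := S17.Lroot (thetaC θ u) (thetaC θ v) (thetaC θ w)
      obtain ⟨a', b', hab', hz', hcross⟩ := S17.Lpartner _ _ _ _ _ hab hdisc hz
      apply Set.Finite.subset (Set.Finite.insert
        (Projectivization.mk ℂ ![a, b] (S17.vec_ne_zero hab))
        (Set.finite_singleton (Projectivization.mk ℂ ![a', b'] (S17.vec_ne_zero hab'))))
      intro r hr
      rw [S17.mem_qZero_iff] at hr
      simp only [Set.mem_insert_iff, Set.mem_singleton_iff]
      by_contra hrr
      push_neg at hrr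
      obtain ⟨hr1, hr2⟩ := hrr
      have hc1 : a * r.rep 1 - r.rep 0 * b ≠ 0 := by
        intro h
        apply hr1
        have h5 := (S17.mk_eq_mk_iff_cr ![a, b] r.rep (S17.vec_ne_zero hab)
          r.rep_nonzero).mpr (by simp only [S17.cr]; simp; linear_combination h)
        rw [Projectivization.mk_rep] at h5
        exact h5.symm
      have hc2 : a' * r.rep 1 - r.rep 0 * b' ≠ 0 := by
        intro h
        apply hr2
        have h5 := (S17.mk_eq_mk_iff_cr ![a', b'] r.rep (S17.vec_ne_zero hab')
          r.rep_nonzero).mpr (by simp only [S17.cr]; simp; linear_combination h)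
        rw [Projectivization.mk_rep] at h5
        exact h5.symm
      have h12 : a * b' - a' * b ≠ 0 := by
        intro h; apply hcross; linear_combination h
      exact hnz θ hθ (S17.Lthree _ _ _ a b a' b' (r.rep 0) (r.rep 1)
        h12 hc1 hc2 hz hz' (by simpa [S17.qv] using hr))
  have hZfin : (⋃ θ ∈ Φ, qZero u v w θ).Finite := Set.Finite.biUnion Φ.finite_toSet hqfin
  -- the two transversal points
  obtain ⟨γ₁, γ₂, hγne, hTeq⟩ := Set.ncard_eq_two.mp htwo
  have hγ₁T : γ₁ ∈ {γ ∈ ⋃ θ ∈ Φ, qZero u v w θ |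
      ∃ θ ∈ Φ, γ ∈ qZero u v w θ ∧ discQ u v w θ ≠ 0} := by
    rw [hTeq]; exact Set.mem_insert _ _
  obtain ⟨hγ₁Z, θ₀, hθ₀Φ, hθ₀γ₁, hθ₀disc⟩ := hγ₁T
  have hΔ : γ₁.rep 0 * γ₂.rep 1 - γ₂.rep 0 * γ₁.rep 1 ≠ 0 := by
    intro h
    apply hγne
    have h5 := (S17.mk_eq_mk_iff_cr γ₁.rep γ₂.rep γ₁.rep_nonzero γ₂.rep_nonzero).mpr
      (by simp only [S17.cr]; linear_combination h)
    rwa [Projectivization.mk_rep, Projectivization.mk_rep] at h5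
  -- θ₀ also vanishes at γ₂
  have hθ₀γ₂ : γ₂ ∈ qZero u v w θ₀ := by
    obtain ⟨a', b', hab', hz', hcross⟩ := S17.Lpartner _ _ _ (γ₁.rep 0) (γ₁.rep 1)
      (S17.ne_zero_pair _ γ₁.rep_nonzero) hθ₀disc hθ₀γ₁
    have hp' : Projectivization.mk ℂ ![a', b'] (S17.vec_ne_zero hab') ∈ qZero u v w θ₀ := by
      rw [S17.mk_mem_qZero_iff]
      simpa [S17.qv] using hz'
    have hp'T : Projectivization.mk ℂ ![a', b'] (S17.vec_ne_zero hab') ∈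
        {γ ∈ ⋃ θ ∈ Φ, qZero u v w θ |
          ∃ θ ∈ Φ, γ ∈ qZero u v w θ ∧ discQ u v w θ ≠ 0} :=
      ⟨Set.mem_biUnion hθ₀Φ hp', θ₀, hθ₀Φ, hp', hθ₀disc⟩
    rw [hTeq] at hp'T
    rcases hp'T with h | h
    · exfalso
      rw [show γ₁ = Projectivization.mk ℂ γ₁.rep γ₁.rep_nonzero from (Projectivization.mk_rep γ₁).symm] at h
      rw [S17.mk_eq_mk_iff_cr] at h
      apply hcross
      simp only [S17.cr] at h
      simp at h
      linear_combination -h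
    · rw [Set.mem_singleton_iff] at h
      rw [← h]; exact hp'
  -- the (unique possible) tangential point
  have hγ₁nTang : γ₁ ∉ {γ ∈ ⋃ θ ∈ Φ, qZero u v w θ |
      ∀ θ ∈ Φ, γ ∈ qZero u v w θ → discQ u v w θ = 0} := by
    rintro ⟨-, hall⟩
    exact hθ₀disc (hall θ₀ hθ₀Φ hθ₀γ₁)
  have hγ₂nTang : γ₂ ∉ {γ ∈ ⋃ θ ∈ Φ, qZero u v w θ |
      ∀ θ ∈ Φ, γ ∈ qZero u v w θ → discQ u v w θ = 0} := by
    rintro ⟨-, hall⟩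
    exact hθ₀disc (hall θ₀ hθ₀Φ hθ₀γ₂)
  obtain ⟨a₃, b₃, hs₁, hs₂, hTsub⟩ : ∃ a₃ b₃ : ℂ,
      (γ₁.rep 0 * b₃ - a₃ * γ₁.rep 1 ≠ 0) ∧ (γ₂.rep 0 * b₃ - a₃ * γ₂.rep 1 ≠ 0) ∧
      ∀ p, p ∈ {γ ∈ ⋃ θ ∈ Φ, qZero u v w θ |
          ∀ θ ∈ Φ, γ ∈ qZero u v w θ → discQ u v w θ = 0} →
        p.rep 0 = a₃ ∧ p.rep 1 = b₃ := by
    rcases Set.eq_empty_or_nonempty {γ ∈ ⋃ θ ∈ Φ, qZero u v w θ |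
        ∀ θ ∈ Φ, γ ∈ qZero u v w θ → discQ u v w θ = 0} with hT | ⟨δ₀, hδ₀⟩
    · refine ⟨γ₁.rep 0 + γ₂.rep 0, γ₁.rep 1 + γ₂.rep 1,
        (by intro h; apply hΔ; linear_combination h),
        (by intro h; apply hΔ; linear_combination -h),
        fun p hp => ?_⟩
      rw [hT] at hp
      exact absurd hp (Set.notMem_empty p)
    · have hTangfin : {γ ∈ ⋃ θ ∈ Φ, qZero u v w θ |
          ∀ θ ∈ Φ, γ ∈ qZero u v w θ → discQ u v w θ = 0}.Finite :=
        hZfin.subset (Set.sep_subset _ _)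
      have huniq : ∀ p ∈ {γ ∈ ⋃ θ ∈ Φ, qZero u v w θ |
          ∀ θ ∈ Φ, γ ∈ qZero u v w θ → discQ u v w θ = 0}, p = δ₀ := by
        intro p hp
        by_contra hpne
        have hsub : ({p, δ₀} : Set (Projectivization ℂ (Fin 2 → ℂ))) ⊆ {γ ∈ ⋃ θ ∈ Φ, qZero u v w θ |
            ∀ θ ∈ Φ, γ ∈ qZero u v w θ → discQ u v w θ = 0} := by
          rintro x (rfl | rfl)
          · exact hp
          · exact hδ₀
        have h2 := Set.ncard_le_ncard hsub hTangfin
        rw [Set.ncard_pair hpne] at h2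
        omega
      have hδγ₁ : δ₀ ≠ γ₁ := fun h => hγ₁nTang (h ▸ hδ₀)
      have hδγ₂ : δ₀ ≠ γ₂ := fun h => hγ₂nTang (h ▸ hδ₀)
      refine ⟨δ₀.rep 0, δ₀.rep 1, ?_, ?_, fun p hp => by rw [huniq p hp]; exact ⟨rfl, rfl⟩⟩
      · intro h
        apply hδγ₁
        have h5 := (S17.mk_eq_mk_iff_cr δ₀.rep γ₁.rep δ₀.rep_nonzero γ₁.rep_nonzero).mpr
          (by simp only [S17.cr]; linear_combination -h)
        rwa [Projectivization.mk_rep, Projectivization.mk_rep] at h5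
      · intro h
        apply hδγ₂
        have h5 := (S17.mk_eq_mk_iff_cr δ₀.rep γ₂.rep δ₀.rep_nonzero γ₂.rep_nonzero).mpr
          (by simp only [S17.cr]; linear_combination -h)
        rwa [Projectivization.mk_rep, Projectivization.mk_rep] at h5
  -- classification of roots
  have hclass : ∀ θ ∈ Φ, S17.Pq (γ₁.rep 0 * b₃ - a₃ * γ₁.rep 1) (γ₂.rep 0 * b₃ - a₃ * γ₂.rep 1)
      (S17.qv (thetaC θ u) (thetaC θ v) (thetaC θ w) γ₁.rep)
      (2 * thetaC θ u * (γ₁.rep 0 * γ₂.rep 0)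
        + thetaC θ v * (γ₁.rep 0 * γ₂.rep 1 + γ₂.rep 0 * γ₁.rep 1)
        + 2 * thetaC θ w * (γ₁.rep 1 * γ₂.rep 1))
      (S17.qv (thetaC θ u) (thetaC θ v) (thetaC θ w) γ₂.rep) := by
    intro θ hθ
    obtain ⟨a, b, hab, hz⟩ := S17.Lroot (thetaC θ u) (thetaC θ v) (thetaC θ w)
    have hp : Projectivization.mk ℂ ![a, b] (S17.vec_ne_zero hab) ∈ qZero u v w θ := by
      rw [S17.mk_mem_qZero_iff]
      simpa [S17.qv] using hz
    have hpZ : Projectivization.mk ℂ ![a, b] (S17.vec_ne_zero hab) ∈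
        ⋃ θ ∈ Φ, qZero u v w θ := Set.mem_biUnion hθ hp
    by_cases hdisc : discQ u v w θ = 0
    · obtain ⟨t, hA, hB, hC⟩ := S17.Ldouble _ _ _ a b hab hdisc hz
      by_cases hptrans : ∃ θ' ∈ Φ, Projectivization.mk ℂ ![a, b] (S17.vec_ne_zero hab)
          ∈ qZero u v w θ' ∧ discQ u v w θ' ≠ 0
      · have hpT : Projectivization.mk ℂ ![a, b] (S17.vec_ne_zero hab) ∈
            ({γ₁, γ₂} : Set (Projectivization ℂ (Fin 2 → ℂ))) := by
          rw [← hTeq]; exact ⟨hpZ, hptrans⟩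
        rcases hpT with h | h
        · -- double point at γ₁ : type 1
          have hcr : a * γ₁.rep 1 - b * γ₁.rep 0 = 0 := by
            rw [show γ₁ = Projectivization.mk ℂ γ₁.rep γ₁.rep_nonzero from
              (Projectivization.mk_rep γ₁).symm, S17.mk_eq_mk_iff_cr] at h
            simp only [S17.cr] at h
            simpa using h
          refine Or.inr (Or.inl ⟨?_, ?_⟩)
          · simp only [S17.qv]
            rw [hA, hB, hC]
            linear_combination (t * (a * γ₁.rep 1 - b * γ₁.rep 0)) * hcr
          · rw [hA, hB, hC]
            linear_combination (2 * t * (a * γ₂.rep 1 - b * γ₂.rep 0)) * hcr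
        · -- double point at γ₂ : type 2
          rw [Set.mem_singleton_iff] at h
          have hcr : a * γ₂.rep 1 - b * γ₂.rep 0 = 0 := by
            rw [show γ₂ = Projectivization.mk ℂ γ₂.rep γ₂.rep_nonzero from
              (Projectivization.mk_rep γ₂).symm, S17.mk_eq_mk_iff_cr] at h
            simp only [S17.cr] at h
            simpa using h
          refine Or.inr (Or.inr (Or.inl ⟨?_, ?_⟩))
          · rw [hA, hB, hC]
            linear_combination (2 * t * (a * γ₁.rep 1 - b * γ₁.rep 0)) * hcr
          · simp only [S17.qv]
            rw [hA, hB, hC]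
            linear_combination (t * (a * γ₂.rep 1 - b * γ₂.rep 0)) * hcr
      · -- tangential point : type 3
        have hpTang : Projectivization.mk ℂ ![a, b] (S17.vec_ne_zero hab) ∈
            {γ ∈ ⋃ θ ∈ Φ, qZero u v w θ |
              ∀ θ ∈ Φ, γ ∈ qZero u v w θ → discQ u v w θ = 0} := by
          refine ⟨hpZ, fun θ' hθ' hv => ?_⟩
          by_contra hd'
          exact hptrans ⟨θ', hθ', hv, hd'⟩
        obtain ⟨h30, h31⟩ := hTsub _ hpTang
        have h3nz : ¬(a₃ = 0 ∧ b₃ = 0) := by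
          rw [← h30, ← h31]
          exact S17.ne_zero_pair _ (Projectivization.rep_nonzero _)
        have hcr3 : a * b₃ - b * a₃ = 0 := by
          have h6 : Projectivization.mk ℂ ![a, b] (S17.vec_ne_zero hab) =
              Projectivization.mk ℂ (Projectivization.mk ℂ ![a, b]
                (S17.vec_ne_zero hab)).rep (Projectivization.rep_nonzero _) :=
            (Projectivization.mk_rep _).symm
          rw [S17.mk_eq_mk_iff_cr] at h6
          simp only [S17.cr, h30, h31] at h6
          simpa using h6
        obtain ⟨l, rfl, rfl⟩ := S17.Lpar a b a₃ b₃ h3nz hcr3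
        refine Or.inr (Or.inr (Or.inr ⟨t * l ^ 2, ?_, ?_, ?_⟩))
        · simp only [S17.qv]
          rw [hA, hB, hC]; ring
        · rw [hA, hB, hC]; ring
        · simp only [S17.qv]
          rw [hA, hB, hC]; ring
    · -- transversal root : type 0
      obtain ⟨a', b', hab', hz', hcross⟩ := S17.Lpartner _ _ _ _ _ hab hdisc hz
      have hp' : Projectivization.mk ℂ ![a', b'] (S17.vec_ne_zero hab') ∈ qZero u v w θ := by
        rw [S17.mk_mem_qZero_iff]
        simpa [S17.qv] using hz'
      have hppne : Projectivization.mk ℂ ![a, b] (S17.vec_ne_zero hab) ≠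
          Projectivization.mk ℂ ![a', b'] (S17.vec_ne_zero hab') := by
        intro h
        rw [S17.mk_eq_mk_iff_cr] at h
        simp only [S17.cr] at h
        simp at h
        exact hcross (by linear_combination h)
      have hpT : Projectivization.mk ℂ ![a, b] (S17.vec_ne_zero hab) ∈
          ({γ₁, γ₂} : Set (Projectivization ℂ (Fin 2 → ℂ))) := by
        rw [← hTeq]; exact ⟨hpZ, θ, hθ, hp, hdisc⟩
      have hp'T : Projectivization.mk ℂ ![a', b'] (S17.vec_ne_zero hab') ∈
          ({γ₁, γ₂} : Set (Projectivization ℂ (Fin 2 → ℂ))) := by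
        rw [← hTeq]; exact ⟨Set.mem_biUnion hθ hp', θ, hθ, hp', hdisc⟩
      have hvan : γ₁ ∈ qZero u v w θ ∧ γ₂ ∈ qZero u v w θ := by
        rcases hpT with h1 | h1 <;> rcases hp'T with h2 | h2
        · exact absurd (h1.trans h2.symm) hppne
        · rw [Set.mem_singleton_iff] at h2
          exact ⟨h1 ▸ hp, h2 ▸ hp'⟩
        · rw [Set.mem_singleton_iff] at h1
          exact ⟨h2 ▸ hp', h1 ▸ hp⟩
        · rw [Set.mem_singleton_iff] at h1 h2
          exact absurd (h1.trans h2.symm) hppne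
      exact Or.inl ⟨hvan.1, hvan.2⟩
  -- split Φ into roots vanishing at both transversal points, and the rest
  set SA : Set (Fin d → ℝ) :=
    {x | x ∈ (Φ : Set (Fin d → ℝ)) ∧ (γ₁ ∈ qZero u v w x ∧ γ₂ ∈ qZero u v w x)} with hSA
  set SB : Set (Fin d → ℝ) :=
    {x | x ∈ (Φ : Set (Fin d → ℝ)) ∧ ¬(γ₁ ∈ qZero u v w x ∧ γ₂ ∈ qZero u v w x)} with hSB
  have hunion : (Φ : Set (Fin d → ℝ)) = SA ∪ SB := by
    ext x
    simp only [hSA, hSB, Set.mem_union, Set.mem_setOf_eq]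
    by_cases hx : x ∈ (Φ : Set (Fin d → ℝ)) <;>
      by_cases hv : (γ₁ ∈ qZero u v w x ∧ γ₂ ∈ qZero u v w x) <;> tauto
  have hdisj : Disjoint SA SB := by
    rw [Set.disjoint_left]
    rintro x ⟨-, hx⟩ ⟨-, hx'⟩
    exact hx' hx
  have horth : ∀ a ∈ SA, ∀ b ∈ SB, dotR a b = 0 := by
    rintro α ⟨hαΦ, hαG, hαF⟩ β ⟨hβΦ, hβn⟩
    by_contra hdot
    have hαne : α ≠ 0 := hne0 α hαΦ
    have hba : dotR β α ≠ 0 := by rw [S17.dotR_comm]; exact hdot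
    have hkne : 2 * dotR β α / dotR α α ≠ 0 :=
      div_ne_zero (mul_ne_zero two_ne_zero hba) (S17.dotR_self_ne_zero α hαne)
    have hβ'Φ : β - (2 * dotR β α / dotR α α) • α ∈ Φ := hrefl α hαΦ β hβΦ
    set k : ℝ := 2 * dotR β α / dotR α α with hk
    have hkC : (k : ℂ) ≠ 0 := Complex.ofReal_ne_zero.mpr hkne
    have hαG' : S17.qv (thetaC α u) (thetaC α v) (thetaC α w) γ₁.rep = 0 := hαG
    have hαF' : S17.qv (thetaC α u) (thetaC α v) (thetaC α w) γ₂.rep = 0 := hαF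
    have hHα : 2 * thetaC α u * (γ₁.rep 0 * γ₂.rep 0)
        + thetaC α v * (γ₁.rep 0 * γ₂.rep 1 + γ₂.rep 0 * γ₁.rep 1)
        + 2 * thetaC α w * (γ₁.rep 1 * γ₂.rep 1) ≠ 0 := by
      intro h
      exact hnz α hαΦ (S17.Linj _ _ _ _ _ _ _ hΔ hαG' h hαF')
    have hPβ := hclass β hβΦ
    have hPβ' := hclass _ hβ'Φ
    rw [S17.qv_lin, S17.qv_lin, S17.hv_lin, hαG', hαF', mul_zero, sub_zero, sub_zero] at hPβ'
    refine S17.Lortho _ _ _ _ _ _ hs₁ hs₂ ?_ hPβ ?_ ?_ hPβ'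
    · intro h
      rw [sub_eq_self] at h
      exact mul_ne_zero hkC hHα h
    · intro hGF
      exact hβn ⟨hGF.1, hGF.2⟩
    · rintro ⟨h1, h2, h3⟩
      exact hnz β hβΦ (S17.Linj _ _ _ _ _ _ _ hΔ h1 h2 h3)
  rcases hirr SA SB hunion hdisj horth with hSAe | hSBe
  · refine absurd (show θ₀ ∈ SA from ⟨hθ₀Φ, hθ₀γ₁, hθ₀γ₂⟩) ?_
    rw [hSAe]
    exact Set.notMem_empty θ₀
  · have hall : ∀ θ ∈ Φ, γ₁ ∈ qZero u v w θ := by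
      intro θ hθ
      have hθm : θ ∈ SA ∪ SB := by rw [← hunion]; exact hθ
      rcases hθm with h | h
      · exact h.2.1
      · rw [hSBe] at h
        exact absurd h (Set.notMem_empty θ)
    have hynz : (γ₁.rep 0 ^ 2) • u + (γ₁.rep 0 * γ₁.rep 1) • v + (γ₁.rep 1 ^ 2) • w ≠ 0 := by
      apply S17.comb_ne_zero u v w hli
      rintro ⟨h1, h2, h3⟩
      exact S17.ne_zero_pair γ₁.rep γ₁.rep_nonzero
        ⟨pow_eq_zero_iff (two_ne_zero) |>.mp h1, pow_eq_zero_iff (two_ne_zero) |>.mp h3⟩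
    apply hynz
    apply S17.span_dot_zero Φ hspan
    intro θ hθ
    rw [S17.thetaC_comb]
    have h : thetaC θ u * γ₁.rep 0 ^ 2 + thetaC θ v * (γ₁.rep 0 * γ₁.rep 1)
        + thetaC θ w * γ₁.rep 1 ^ 2 = 0 := hall θ hθ
    linear_combination h

end
end

section
/- Let Φ be a reduced irreducible root system in ℝ^d with d ≥ 2, and let u, v, w ∈ ℂ^d be linearly independent over ℂ with (θ_ℂ(u), θ_ℂ(v), θ_ℂ(w)) ≠ (0,0,0) for every θ ∈ Φ. Then the set Z := ⋃_{θ∈Φ} Z(q_θ) ⊆ ℙ¹(ℂ) has at least 3 elements. -/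
noncomputable section

/-! ### Auxiliary lemmas -/

lemma thetaC_add {d : ℕ} (α β : Fin d → ℝ) (z : Fin d → ℂ) :
    thetaC (α + β) z = thetaC α z + thetaC β z := by
  simp [thetaC, add_mul, Finset.sum_add_distrib]

lemma thetaC_smul {d : ℕ} (t : ℝ) (θ : Fin d → ℝ) (z : Fin d → ℂ) :
    thetaC (t • θ) z = (t : ℂ) * thetaC θ z := by
  simp [thetaC, Finset.mul_sum, mul_assoc]

lemma thetaC_neg {d : ℕ} (θ : Fin d → ℝ) (z : Fin d → ℂ) :
    thetaC (-θ) z = -thetaC θ z := by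
  simp [thetaC]

lemma thetaC_single {d : ℕ} (i : Fin d) (z : Fin d → ℂ) :
    thetaC (Pi.single i 1) z = z i := by
  simp [thetaC, Pi.single_apply]
  rw [Finset.sum_eq_single i] <;> simp +contextual

lemma dotR_comm {d : ℕ} (x y : Fin d → ℝ) : dotR x y = dotR y x := by
  simp [dotR, mul_comm]

lemma dotR_pos {d : ℕ} {x : Fin d → ℝ} (hx : x ≠ 0) : 0 < dotR x x := by
  have hnn : 0 ≤ dotR x x := Finset.sum_nonneg fun i _ => mul_self_nonneg _
  rcases hnn.lt_or_eq with h | h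
  · exact h
  · exfalso
    apply hx
    funext i
    have := (Finset.sum_eq_zero_iff_of_nonneg (fun i _ => mul_self_nonneg (x i))).mp h.symm i
      (Finset.mem_univ i)
    exact mul_self_eq_zero.mp this

lemma dotR_expand {d : ℕ} (α β : Fin d → ℝ) (t : ℝ) :
    dotR (β - t • α) (β - t • α) = dotR β β - 2*t*(dotR α β) + t^2 * dotR α α := by
  have h : ∀ i : Fin d, (β - t • α) i * (β - t • α) i
      = β i * β i - 2*t*(α i * β i) + t^2*(α i * α i) := by
    intro i; simp [Pi.sub_apply, Pi.smul_apply, smul_eq_mul]; ring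
  simp only [dotR]
  rw [Finset.sum_congr rfl fun i _ => h i]
  rw [Finset.sum_add_distrib, Finset.sum_sub_distrib, ← Finset.mul_sum, ← Finset.mul_sum]

lemma dot_sq_lt {d : ℕ} (α β : Fin d → ℝ) (hα : α ≠ 0) (hpar : ∀ t : ℝ, β ≠ t • α) :
    dotR α β ^ 2 < dotR α α * dotR β β := by
  have haa : 0 < dotR α α := dotR_pos hα
  set t : ℝ := dotR α β / dotR α α with ht
  have hγ : β - t • α ≠ 0 := by
    intro h
    exact hpar t (by rwa [sub_eq_zero] at h)
  have hpos : 0 < dotR (β - t • α) (β - t • α) := dotR_pos hγ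
  rw [dotR_expand] at hpos
  have key : dotR β β - 2*t*(dotR α β) + t^2 * dotR α α
      = (dotR α α * dotR β β - dotR α β ^ 2) / dotR α α := by
    field_simp [ht]
    rw [ht]; field_simp; ring
  rw [key] at hpos
  rcases div_pos_iff.mp hpos with ⟨h1, _⟩ | ⟨_, h2⟩
  · linarith
  · linarith

lemma root_sum {d : ℕ} (Φ : Finset (Fin d → ℝ)) (hRS : IsRootSystem Φ)
    (hred : IsReducedRS Φ) (α β : Fin d → ℝ) (hα : α ∈ Φ) (hβ : β ∈ Φ)
    (hdot : dotR α β ≠ 0) (hne1 : β ≠ α) (hne2 : β ≠ -α) :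
    (α + β ∈ Φ) ∨ (β - α ∈ Φ) ∨ (α - β ∈ Φ) := by
  obtain ⟨hnz, hspan, hrefl, hint⟩ := hRS
  have hα0 : α ≠ 0 := hnz α hα
  have hβ0 : β ≠ 0 := hnz β hβ
  have haa : 0 < dotR α α := dotR_pos hα0
  have hbb : 0 < dotR β β := dotR_pos hβ0
  have hpar : ∀ t : ℝ, β ≠ t • α := by
    intro t h
    rcases hred α hα t (h ▸ hβ) with rfl | rfl
    · exact hne1 (by simpa using h)
    · exact hne2 (by simpa using h)
  have hcs : dotR α β ^ 2 < dotR α α * dotR β β := dot_sq_lt α β hα0 hpar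
  obtain ⟨n1, hn1⟩ := hint α hα β hβ
  obtain ⟨n2, hn2⟩ := hint β hβ α hα
  have hba : dotR β α = dotR α β := dotR_comm β α
  have hprod : (n1 : ℝ) * (n2 : ℝ) = 4 * (dotR α β)^2 / (dotR α α * dotR β β) := by
    rw [← hn1, ← hn2, hba]
    field_simp
    ring
  have hlt : (n1 : ℝ) * (n2 : ℝ) < 4 := by
    rw [hprod, div_lt_iff₀ (by positivity)]
    nlinarith
  have hgt : (0 : ℝ) < (n1 : ℝ) * (n2 : ℝ) := by
    rw [hprod]
    positivity
  have hlt' : n1 * n2 < 4 := by exact_mod_cast hlt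
  have hgt' : 0 < n1 * n2 := by exact_mod_cast hgt
  rcases lt_or_gt_of_ne hdot with hs | hs
  · have hn1neg : (n1 : ℝ) < 0 := by
      rw [← hn1, hba]
      apply div_neg_of_neg_of_pos _ haa
      linarith
    have hn2neg : (n2 : ℝ) < 0 := by
      rw [← hn2]
      apply div_neg_of_neg_of_pos _ hbb
      linarith
    have h1 : n1 < 0 := by exact_mod_cast hn1neg
    have h2 : n2 < 0 := by exact_mod_cast hn2neg
    have : n1 = -1 ∨ n2 = -1 := by
      by_contra hc
      push_neg at hc
      have e1 : n1 ≤ -2 := by omega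
      have e2 : n2 ≤ -2 := by omega
      nlinarith
    left
    rcases this with h | h
    · have := hrefl α hα β hβ
      rw [hn1, h] at this
      simpa [sub_neg_eq_add, add_comm] using this
    · have := hrefl β hβ α hα
      rw [hn2, h] at this
      simpa [sub_neg_eq_add, add_comm] using this
  · have hn1pos : (0:ℝ) < (n1 : ℝ) := by
      rw [← hn1, hba]
      positivity
    have hn2pos : (0:ℝ) < (n2 : ℝ) := by
      rw [← hn2]
      positivity
    have h1 : 0 < n1 := by exact_mod_cast hn1pos
    have h2 : 0 < n2 := by exact_mod_cast hn2pos
    have : n1 = 1 ∨ n2 = 1 := by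
      by_contra hc
      push_neg at hc
      have e1 : 2 ≤ n1 := by omega
      have e2 : 2 ≤ n2 := by omega
      nlinarith
    rcases this with h | h
    · right; left
      have := hrefl α hα β hβ
      rw [hn1, h] at this
      simpa using this
    · right; right
      have := hrefl β hβ α hα
      rw [hn2, h] at this
      simpa using this

/-! ### Projective line lemmas -/

abbrev P1C := Projectivization ℂ (Fin 2 → ℂ)

lemma fin2_nz {a b : ℂ} (h : ¬(a = 0 ∧ b = 0)) : (![a, b] : Fin 2 → ℂ) ≠ 0 := by
  intro h0
  apply h
  constructor
  · have := congrFun h0 0; simpa using this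
  · have := congrFun h0 1; simpa using this

def lpt (a b : ℂ) (h : ¬(a = 0 ∧ b = 0)) : P1C :=
  Projectivization.mk ℂ ![b, -a] (fin2_nz (by rintro ⟨h1, h2⟩; exact h ⟨by simpa using h2, h1⟩))

lemma rep_nz (x : P1C) : ¬(x.rep 0 = 0 ∧ x.rep 1 = 0) := by
  rintro ⟨h0, h1⟩
  apply x.rep_nonzero
  funext i
  fin_cases i <;> assumption

lemma lpt_spec (a b : ℂ) (h : ¬(a = 0 ∧ b = 0)) (x : P1C) :
    a * x.rep 0 + b * x.rep 1 = 0 ↔ x = lpt a b h := by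
  have hnz : (![b, -a] : Fin 2 → ℂ) ≠ 0 :=
    fin2_nz (by rintro ⟨h1, h2⟩; exact h ⟨by simpa using h2, h1⟩)
  constructor
  · intro hx
    rw [← x.mk_rep]
    show Projectivization.mk ℂ x.rep x.rep_nonzero = Projectivization.mk ℂ ![b, -a] hnz
    rw [Projectivization.mk_eq_mk_iff]
    by_cases ha : a = 0
    · have hb : b ≠ 0 := fun hb => h ⟨ha, hb⟩
      have hx1 : x.rep 1 = 0 := by
        rw [ha, zero_mul, zero_add] at hx
        exact (mul_eq_zero.mp hx).resolve_left hb
      have hx0 : x.rep 0 ≠ 0 := fun h0 => rep_nz x ⟨h0, hx1⟩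
      refine ⟨Units.mk0 (x.rep 0 / b) (by simp [hx0, hb]), ?_⟩
      funext i
      fin_cases i <;> simp [Units.smul_def, ha, hx1, hb] <;> field_simp
    · have hx1 : x.rep 1 ≠ 0 := by
        intro h1
        have h0 : x.rep 0 = 0 := by
          rw [h1] at hx; simpa [ha] using hx
        exact rep_nz x ⟨h0, h1⟩
      refine ⟨Units.mk0 (-(x.rep 1) / a) (by simp [hx1, ha]), ?_⟩
      funext i
      fin_cases i <;> simp [Units.smul_def]
      · field_simp
        linear_combination -hx
      · field_simp
  · intro hx
    subst hx
    obtain ⟨t, ht⟩ : ∃ t : ℂˣ, t • ![b, -a] = (lpt a b h).rep :=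
      Projectivization.exists_smul_eq_mk_rep ℂ ![b, -a] hnz
    have h0 : (lpt a b h).rep 0 = (t : ℂ) * b := by rw [← ht]; simp [Units.smul_def]
    have h1 : (lpt a b h).rep 1 = (t : ℂ) * (-a) := by rw [← ht]; simp [Units.smul_def]
    show a * (lpt a b h).rep 0 + b * (lpt a b h).rep 1 = 0
    rw [h0, h1]
    ring

lemma lpt_eq (a b : ℂ) (h : ¬(a = 0 ∧ b = 0)) (x : P1C) (hx : lpt a b h = x) :
    ∃ t : ℂ, t ≠ 0 ∧ a = -(t * x.rep 1) ∧ b = t * x.rep 0 := by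
  have hnz : (![b, -a] : Fin 2 → ℂ) ≠ 0 :=
    fin2_nz (by rintro ⟨h1, h2⟩; exact h ⟨by simpa using h2, h1⟩)
  have : Projectivization.mk ℂ ![b, -a] hnz = Projectivization.mk ℂ x.rep x.rep_nonzero := by
    rw [x.mk_rep]; exact hx
  rw [Projectivization.mk_eq_mk_iff] at this
  obtain ⟨t, ht⟩ := this
  refine ⟨(t : ℂ), t.ne_zero, ?_, ?_⟩
  · have := congrFun ht 1
    simp [Units.smul_def] at this
    linear_combination this
  · have := congrFun ht 0
    simp [Units.smul_def] at this
    exact this.symm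

lemma quad_roots (a b c : ℂ) (h : ¬(a = 0 ∧ b = 0 ∧ c = 0)) :
    ∃ (a1 b1 a2 b2 : ℂ) (h1 : ¬(a1 = 0 ∧ b1 = 0)) (h2 : ¬(a2 = 0 ∧ b2 = 0)),
      a = a1*a2 ∧ b = a1*b2 + a2*b1 ∧ c = b1*b2 ∧
      {x : P1C | a * x.rep 0 ^ 2 + b * (x.rep 0 * x.rep 1) + c * x.rep 1 ^ 2 = 0}
        = {lpt a1 b1 h1, lpt a2 b2 h2} := by
  have main : ∀ (a1 b1 a2 b2 : ℂ) (h1 : ¬(a1 = 0 ∧ b1 = 0)) (h2 : ¬(a2 = 0 ∧ b2 = 0)),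
      a = a1*a2 → b = a1*b2 + a2*b1 → c = b1*b2 →
      {x : P1C | a * x.rep 0 ^ 2 + b * (x.rep 0 * x.rep 1) + c * x.rep 1 ^ 2 = 0}
        = {lpt a1 b1 h1, lpt a2 b2 h2} := by
    intro a1 b1 a2 b2 h1 h2 ha hb hc
    ext x
    have key : a * x.rep 0 ^ 2 + b * (x.rep 0 * x.rep 1) + c * x.rep 1 ^ 2
        = (a1 * x.rep 0 + b1 * x.rep 1) * (a2 * x.rep 0 + b2 * x.rep 1) := by
      rw [ha, hb, hc]; ring
    simp only [Set.mem_setOf_eq, Set.mem_insert_iff, Set.mem_singleton_iff, key, mul_eq_zero]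
    rw [lpt_spec a1 b1 h1 x, lpt_spec a2 b2 h2 x]
  by_cases ha : a = 0
  · have hbc : ¬(b = 0 ∧ c = 0) := by tauto
    refine ⟨0, 1, b, c, by simp, hbc, by simp [ha], by ring, by ring, ?_⟩
    exact main 0 1 b c (by simp) hbc (by simp [ha]) (by ring) (by ring)
  · obtain ⟨s, hs⟩ := IsAlgClosed.exists_pow_nat_eq (b^2 - 4*(a*c)) (n := 2) (by norm_num)
    have h2 : ¬((1:ℂ) = 0 ∧ (b+s)/(2*a) = 0) := by simp
    have h1 : ¬(a = 0 ∧ (b-s)/2 = 0) := by tauto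
    refine ⟨a, (b-s)/2, 1, (b+s)/(2*a), h1, h2, by ring, ?_, ?_, main _ _ _ _ h1 h2 (by ring) ?_ ?_⟩
    · field_simp; ring
    · field_simp; linear_combination hs
    · field_simp; ring
    · field_simp; linear_combination hs

/-! ### The three lines -/

def Evec (P0 P1 Q0 Q1 : ℂ) : Fin 3 → Fin 3 → ℂ :=
  ![![P1^2, -(2*(P0*P1)), P0^2],
    ![P1*Q1, -(P0*Q1+P1*Q0), P0*Q0],
    ![Q1^2, -(2*(Q0*Q1)), Q0^2]]

lemma indep3_s18 {P0 P1 Q0 Q1 : ℂ} (hD : P0*Q1 - P1*Q0 ≠ 0) (x : Fin 3 → ℂ)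
    (hx : ∀ c : Fin 3, x 0 * Evec P0 P1 Q0 Q1 0 c + x 1 * Evec P0 P1 Q0 Q1 1 c
      + x 2 * Evec P0 P1 Q0 Q1 2 c = 0) :
    ∀ m : Fin 3, x m = 0 := by
  have h1 := hx 0
  have h2 := hx 1
  have h3 := hx 2
  simp only [Evec, Matrix.cons_val_zero, Matrix.cons_val_one, Matrix.head_cons,
    Matrix.cons_val_two, Matrix.tail_cons] at h1 h2 h3
  have hD2 : (P0*Q1 - P1*Q0)^2 ≠ 0 := pow_ne_zero _ hD
  have e1 : x 0 * (P0*Q1 - P1*Q0)^2 = 0 := by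
    linear_combination Q0^2 * h1 + Q0*Q1 * h2 + Q1^2 * h3
  have e2 : x 1 * (P0*Q1 - P1*Q0)^2 = 0 := by
    linear_combination (-(2*(P0*Q0))) * h1 + (-(P0*Q1+P1*Q0)) * h2 + (-(2*(P1*Q1))) * h3
  have e3 : x 2 * (P0*Q1 - P1*Q0)^2 = 0 := by
    linear_combination P0^2 * h1 + P0*P1 * h2 + P1^2 * h3
  intro m
  fin_cases m
  · exact (mul_eq_zero.mp e1).resolve_right hD2
  · exact (mul_eq_zero.mp e2).resolve_right hD2
  · exact (mul_eq_zero.mp e3).resolve_right hD2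

lemma dot3 (E : Fin 3 → Fin 3 → ℂ) (c : Fin 3) (i : Fin 3) (l : ℂ) :
    (Pi.single i l : Fin 3 → ℂ) 0 * E 0 c + (Pi.single i l : Fin 3 → ℂ) 1 * E 1 c
      + (Pi.single i l : Fin 3 → ℂ) 2 * E 2 c = l * E i c := by
  fin_cases i <;> simp [Pi.single_apply]

lemma line_add {P0 P1 Q0 Q1 : ℂ} (hD : P0*Q1 - P1*Q0 ≠ 0) (i j k : Fin 3)
    (la lb lc : ℂ) (hla : la ≠ 0) (hlb : lb ≠ 0) (hlc : lc ≠ 0)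
    (h : ∀ c : Fin 3, la * Evec P0 P1 Q0 Q1 i c + lb * Evec P0 P1 Q0 Q1 j c
      = lc * Evec P0 P1 Q0 Q1 k c) :
    j = i ∧ k = i := by
  have hx : ∀ m : Fin 3, (Pi.single i la : Fin 3 → ℂ) m + (Pi.single j lb : Fin 3 → ℂ) m
      - (Pi.single k lc : Fin 3 → ℂ) m = 0 := by
    apply indep3_s18 hD (fun m => (Pi.single i la : Fin 3 → ℂ) m + (Pi.single j lb : Fin 3 → ℂ) m
      - (Pi.single k lc : Fin 3 → ℂ) m)
    intro c
    have expand : ((Pi.single i la : Fin 3 → ℂ) 0 + (Pi.single j lb : Fin 3 → ℂ) 0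
        - (Pi.single k lc : Fin 3 → ℂ) 0) * Evec P0 P1 Q0 Q1 0 c
        + ((Pi.single i la : Fin 3 → ℂ) 1 + (Pi.single j lb : Fin 3 → ℂ) 1
        - (Pi.single k lc : Fin 3 → ℂ) 1) * Evec P0 P1 Q0 Q1 1 c
        + ((Pi.single i la : Fin 3 → ℂ) 2 + (Pi.single j lb : Fin 3 → ℂ) 2
        - (Pi.single k lc : Fin 3 → ℂ) 2) * Evec P0 P1 Q0 Q1 2 c
        = ((Pi.single i la : Fin 3 → ℂ) 0 * Evec P0 P1 Q0 Q1 0 c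
            + (Pi.single i la : Fin 3 → ℂ) 1 * Evec P0 P1 Q0 Q1 1 c
            + (Pi.single i la : Fin 3 → ℂ) 2 * Evec P0 P1 Q0 Q1 2 c)
          + ((Pi.single j lb : Fin 3 → ℂ) 0 * Evec P0 P1 Q0 Q1 0 c
            + (Pi.single j lb : Fin 3 → ℂ) 1 * Evec P0 P1 Q0 Q1 1 c
            + (Pi.single j lb : Fin 3 → ℂ) 2 * Evec P0 P1 Q0 Q1 2 c)
          - ((Pi.single k lc : Fin 3 → ℂ) 0 * Evec P0 P1 Q0 Q1 0 c
            + (Pi.single k lc : Fin 3 → ℂ) 1 * Evec P0 P1 Q0 Q1 1 c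
            + (Pi.single k lc : Fin 3 → ℂ) 2 * Evec P0 P1 Q0 Q1 2 c) := by ring
    show _ = (0 : ℂ)
    rw [expand, dot3 (Evec P0 P1 Q0 Q1) c, dot3 (Evec P0 P1 Q0 Q1) c,
      dot3 (Evec P0 P1 Q0 Q1) c, h c]
    ring
  by_cases hji : j = i
  · by_cases hki : k = i
    · exact ⟨hji, hki⟩
    · exfalso
      have hk := hx k
      rw [Pi.single_eq_of_ne hki, hji, Pi.single_eq_of_ne hki, Pi.single_eq_same] at hk
      simp at hk
      exact hlc hk
  · exfalso
    by_cases hki : k = i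
    · have hj := hx j
      rw [Pi.single_eq_of_ne hji, Pi.single_eq_same, hki,
        Pi.single_eq_of_ne hji] at hj
      simp at hj
      exact hlb hj
    · have hi := hx i
      rw [Pi.single_eq_same, Pi.single_eq_of_ne (fun h : i = j => hji h.symm),
        Pi.single_eq_of_ne (fun h : i = k => hki h.symm)] at hi
      simp at hi
      exact hla hi

lemma line_eq {P0 P1 Q0 Q1 : ℂ} (hD : P0*Q1 - P1*Q0 ≠ 0) (i j : Fin 3)
    (l m : ℂ) (hl : l ≠ 0)
    (h : ∀ c : Fin 3, l * Evec P0 P1 Q0 Q1 i c = m * Evec P0 P1 Q0 Q1 j c) :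
    i = j := by
  by_contra hij
  have hx : ∀ n : Fin 3, (Pi.single i l : Fin 3 → ℂ) n - (Pi.single j m : Fin 3 → ℂ) n = 0 := by
    apply indep3_s18 hD (fun n => (Pi.single i l : Fin 3 → ℂ) n - (Pi.single j m : Fin 3 → ℂ) n)
    intro c
    have expand : ((Pi.single i l : Fin 3 → ℂ) 0 - (Pi.single j m : Fin 3 → ℂ) 0) * Evec P0 P1 Q0 Q1 0 c
        + ((Pi.single i l : Fin 3 → ℂ) 1 - (Pi.single j m : Fin 3 → ℂ) 1) * Evec P0 P1 Q0 Q1 1 c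
        + ((Pi.single i l : Fin 3 → ℂ) 2 - (Pi.single j m : Fin 3 → ℂ) 2) * Evec P0 P1 Q0 Q1 2 c
        = ((Pi.single i l : Fin 3 → ℂ) 0 * Evec P0 P1 Q0 Q1 0 c
            + (Pi.single i l : Fin 3 → ℂ) 1 * Evec P0 P1 Q0 Q1 1 c
            + (Pi.single i l : Fin 3 → ℂ) 2 * Evec P0 P1 Q0 Q1 2 c)
          - ((Pi.single j m : Fin 3 → ℂ) 0 * Evec P0 P1 Q0 Q1 0 c
            + (Pi.single j m : Fin 3 → ℂ) 1 * Evec P0 P1 Q0 Q1 1 c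
            + (Pi.single j m : Fin 3 → ℂ) 2 * Evec P0 P1 Q0 Q1 2 c) := by ring
    show _ = (0 : ℂ)
    rw [expand, dot3 (Evec P0 P1 Q0 Q1) c, dot3 (Evec P0 P1 Q0 Q1) c, h c]
    ring
  have hi := hx i
  rw [Pi.single_eq_same, Pi.single_eq_of_ne (fun h : i = j => hij h)] at hi
  simp at hi
  exact hl hi

lemma Evec_ne {P0 P1 Q0 Q1 : ℂ} (hD : P0*Q1 - P1*Q0 ≠ 0) (i : Fin 3) :
    ¬(Evec P0 P1 Q0 Q1 i 0 = 0 ∧ Evec P0 P1 Q0 Q1 i 1 = 0 ∧ Evec P0 P1 Q0 Q1 i 2 = 0) := by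
  rintro ⟨h0, h1, h2⟩
  apply hD
  fin_cases i <;> simp [Evec] at h0 h1 h2
  · simp [h0, h2]
  · rcases h0 with h0 | h0 <;> rcases h2 with h2 | h2 <;>
      simp [h0, h2] at h1 ⊢ <;> simp [h1]
  · simp [h0, h2]

/-- The predicate: the coefficient vector of `q_θ` lies on the `i`-th of the three lines. -/
def OnLine {d : ℕ} (u v w : Fin d → ℂ) (P0 P1 Q0 Q1 : ℂ) (θ : Fin d → ℝ) (i : Fin 3) : Prop :=
  ∃ l : ℂ, l ≠ 0 ∧ thetaC θ u = l * Evec P0 P1 Q0 Q1 i 0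
    ∧ thetaC θ v = l * Evec P0 P1 Q0 Q1 i 1 ∧ thetaC θ w = l * Evec P0 P1 Q0 Q1 i 2

lemma onLine_unique {d : ℕ} {u v w : Fin d → ℂ} {P0 P1 Q0 Q1 : ℂ}
    (hD : P0*Q1 - P1*Q0 ≠ 0) {θ : Fin d → ℝ} {i j : Fin 3}
    (hi : OnLine u v w P0 P1 Q0 Q1 θ i) (hj : OnLine u v w P0 P1 Q0 Q1 θ j) : i = j := by
  obtain ⟨l, hl, hl0, hl1, hl2⟩ := hi
  obtain ⟨m, hm, hm0, hm1, hm2⟩ := hj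
  apply line_eq hD i j l m hl
  have g0 : l * Evec P0 P1 Q0 Q1 i 0 = m * Evec P0 P1 Q0 Q1 j 0 := by rw [← hl0, ← hm0]
  have g1 : l * Evec P0 P1 Q0 Q1 i 1 = m * Evec P0 P1 Q0 Q1 j 1 := by rw [← hl1, ← hm1]
  have g2 : l * Evec P0 P1 Q0 Q1 i 2 = m * Evec P0 P1 Q0 Q1 j 2 := by rw [← hl2, ← hm2]
  intro c
  fin_cases c
  · exact g0
  · exact g1
  · exact g2

lemma onLine_sum {d : ℕ} {u v w : Fin d → ℂ} {P0 P1 Q0 Q1 : ℂ}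
    (hD : P0*Q1 - P1*Q0 ≠ 0) {α β : Fin d → ℝ} {i j k : Fin 3}
    (hα : OnLine u v w P0 P1 Q0 Q1 α i) (hβ : OnLine u v w P0 P1 Q0 Q1 β j)
    (hs : OnLine u v w P0 P1 Q0 Q1 (α + β) k) : j = i ∧ k = i := by
  obtain ⟨la, hla, ha0, ha1, ha2⟩ := hα
  obtain ⟨lb, hlb, hb0, hb1, hb2⟩ := hβ
  obtain ⟨lc, hlc, hc0, hc1, hc2⟩ := hs
  apply line_add hD i j k la lb lc hla hlb hlc
  have g0 : la * Evec P0 P1 Q0 Q1 i 0 + lb * Evec P0 P1 Q0 Q1 j 0 = lc * Evec P0 P1 Q0 Q1 k 0 := by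
    rw [← ha0, ← hb0, ← hc0, ← thetaC_add]
  have g1 : la * Evec P0 P1 Q0 Q1 i 1 + lb * Evec P0 P1 Q0 Q1 j 1 = lc * Evec P0 P1 Q0 Q1 k 1 := by
    rw [← ha1, ← hb1, ← hc1, ← thetaC_add]
  have g2 : la * Evec P0 P1 Q0 Q1 i 2 + lb * Evec P0 P1 Q0 Q1 j 2 = lc * Evec P0 P1 Q0 Q1 k 2 := by
    rw [← ha2, ← hb2, ← hc2, ← thetaC_add]
  intro c
  fin_cases c
  · exact g0
  · exact g1
  · exact g2

lemma onLine_neg {d : ℕ} {u v w : Fin d → ℂ} {P0 P1 Q0 Q1 : ℂ}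
    {α : Fin d → ℝ} {i : Fin 3} (hα : OnLine u v w P0 P1 Q0 Q1 α i) :
    OnLine u v w P0 P1 Q0 Q1 (-α) i := by
  obtain ⟨l, hl, h0, h1, h2⟩ := hα
  exact ⟨-l, neg_ne_zero.mpr hl, by rw [thetaC_neg, h0]; ring, by rw [thetaC_neg, h1]; ring,
    by rw [thetaC_neg, h2]; ring⟩

/-! ### The final linear-algebra contradiction -/

lemma final_contr {d : ℕ} (Φ : Finset (Fin d → ℝ))
    (hspan : Submodule.span ℝ (Φ : Set (Fin d → ℝ)) = ⊤)
    (u v w : Fin d → ℂ) (hli : LinearIndependent ℂ ![u, v, w])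
    (E0 E1 E2 : ℂ) (hE : ¬(E0 = 0 ∧ E1 = 0 ∧ E2 = 0))
    (hall : ∀ θ ∈ Φ, ∃ m : ℂ, thetaC θ u = m * E0 ∧ thetaC θ v = m * E1 ∧ thetaC θ w = m * E2) :
    False := by
  set W : Submodule ℝ (Fin d → ℝ) :=
    { carrier := {θ | thetaC θ u * E1 = thetaC θ v * E0 ∧ thetaC θ u * E2 = thetaC θ w * E0
        ∧ thetaC θ v * E2 = thetaC θ w * E1}
      add_mem' := by
        rintro a b ⟨ha1, ha2, ha3⟩ ⟨hb1, hb2, hb3⟩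
        refine ⟨?_, ?_, ?_⟩ <;> simp only [Set.mem_setOf_eq, thetaC_add, add_mul] at *
        · rw [ha1, hb1]
        · rw [ha2, hb2]
        · rw [ha3, hb3]
      zero_mem' := by
        have h0 : ∀ z : Fin d → ℂ, thetaC (0 : Fin d → ℝ) z = 0 := by intro z; simp [thetaC]
        refine ⟨?_, ?_, ?_⟩ <;> simp [Set.mem_setOf_eq, h0]
      smul_mem' := by
        rintro t a ⟨ha1, ha2, ha3⟩
        refine ⟨?_, ?_, ?_⟩ <;> simp only [Set.mem_setOf_eq, thetaC_smul, mul_assoc] <;>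
          [rw [ha1]; rw [ha2]; rw [ha3]] } with hW
  have hsub : (Φ : Set (Fin d → ℝ)) ⊆ W := by
    intro θ hθ
    obtain ⟨m, h1, h2, h3⟩ := hall θ hθ
    exact ⟨by rw [h1, h2]; ring, by rw [h1, h3]; ring, by rw [h2, h3]; ring⟩
  have hall' : ∀ θ : Fin d → ℝ, θ ∈ W := by
    intro θ
    have : (⊤ : Submodule ℝ (Fin d → ℝ)) ≤ W := by
      rw [← hspan]
      exact Submodule.span_le.mpr hsub
    exact this trivial
  have hrel : ∀ i : Fin d, u i * E1 = v i * E0 ∧ u i * E2 = w i * E0 ∧ v i * E2 = w i * E1 := by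
    intro i
    have := hall' (Pi.single i 1)
    have h' : thetaC (Pi.single i 1) u * E1 = thetaC (Pi.single i 1) v * E0
        ∧ thetaC (Pi.single i 1) u * E2 = thetaC (Pi.single i 1) w * E0
        ∧ thetaC (Pi.single i 1) v * E2 = thetaC (Pi.single i 1) w * E1 := this
    simpa [thetaC_single] using h'
  have hune : u ≠ 0 := by
    have := hli.ne_zero 0
    simpa using this
  by_cases hE0 : E0 = 0
  · have hE12 : E1 ≠ 0 ∨ E2 ≠ 0 := by
      by_contra hc
      push_neg at hc
      exact hE ⟨hE0, hc.1, hc.2⟩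
    apply hune
    funext i
    rcases hE12 with h12 | h12
    · have := (hrel i).1
      rw [hE0, mul_zero] at this
      exact mul_eq_zero.mp this |>.resolve_right h12
    · have := (hrel i).2.1
      rw [hE0, mul_zero] at this
      exact mul_eq_zero.mp this |>.resolve_right h12
  · have hsum : ∑ i : Fin 3, (![E1, -E0, 0] : Fin 3 → ℂ) i • (![u, v, w] : Fin 3 → Fin d → ℂ) i
        = 0 := by
      rw [Fin.sum_univ_three]
      simp only [Matrix.cons_val_zero, Matrix.cons_val_one, Matrix.head_cons,
        Matrix.cons_val_two, Matrix.tail_cons]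
      funext i
      have h1 := (hrel i).1
      have : E1 * u i + (-E0) * v i + 0 * w i = 0 := by linear_combination h1
      simpa [Pi.add_apply, Pi.smul_apply, smul_eq_mul] using this
    have hg := Fintype.linearIndependent_iff.mp hli ![E1, -E0, 0] hsum 1
    simp at hg
    exact hE0 hg

/-- With `Φ` reduced irreducible of rank `d ≥ 2` and `u, v, w ∈ ℂ^d`
linearly independent with `(θ_ℂ(u), θ_ℂ(v), θ_ℂ(w)) ≠ 0` for every root, the set
`Z = ⋃_{θ∈Φ} Z(q_θ) ⊆ ℙ¹(ℂ)` has at least 3 elements. -/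
theorem stmt18 {d : ℕ} (hd : 2 ≤ d) (Φ : Finset (Fin d → ℝ))
    (hRS : IsRootSystem Φ) (hred : IsReducedRS Φ) (hirr : IsIrreducibleRS Φ)
    (u v w : Fin d → ℂ) (hli : LinearIndependent ℂ ![u, v, w])
    (hnz : ∀ θ ∈ Φ, ¬ (thetaC θ u = 0 ∧ thetaC θ v = 0 ∧ thetaC θ w = 0)) :
    3 ≤ (⋃ θ ∈ Φ, qZero u v w θ).ncard := by
  by_contra hcon
  push_neg at hcon
  set Z : Set P1C := ⋃ θ ∈ Φ, qZero u v w θ with hZ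
  -- factorization data for each root
  have hq : ∀ θ ∈ Φ, ∃ (a1 b1 a2 b2 : ℂ) (h1 : ¬(a1 = 0 ∧ b1 = 0)) (h2 : ¬(a2 = 0 ∧ b2 = 0)),
      thetaC θ u = a1*a2 ∧ thetaC θ v = a1*b2 + a2*b1 ∧ thetaC θ w = b1*b2 ∧
      qZero u v w θ = {lpt a1 b1 h1, lpt a2 b2 h2} :=
    fun θ hθ => quad_roots _ _ _ (hnz θ hθ)
  have hZfin : Z.Finite := by
    apply Set.Finite.biUnion Φ.finite_toSet
    intro θ hθ
    obtain ⟨a1, b1, a2, b2, h1, h2, _, _, _, hset⟩ := hq θ hθ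
    rw [hset]
    exact (Set.finite_singleton _).insert _
  -- Φ is nonempty
  have hΦne : ∃ θ₀, θ₀ ∈ Φ := by
    by_contra hc
    push_neg at hc
    have : Φ = ∅ := Finset.eq_empty_of_forall_notMem hc
    have hbot : Submodule.span ℝ (Φ : Set (Fin d → ℝ)) = ⊥ := by
      rw [this]; simp
    have : Nontrivial (Fin d → ℝ) := by
      refine ⟨⟨0, fun _ => 1, fun hh => ?_⟩⟩
      have := congrFun hh ⟨0, by omega⟩
      simp at this
    rw [hRS.2.1] at hbot
    exact absurd hbot.symm bot_ne_top
  obtain ⟨θ₀, hθ₀⟩ := hΦne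
  -- Z is contained in a two-point set
  have hex : ∃ p q : P1C, Z ⊆ {p, q} := by
    obtain ⟨a1, b1, a2, b2, h1, h2, _, _, _, hset⟩ := hq θ₀ hθ₀
    have hp0 : lpt a1 b1 h1 ∈ Z := by
      apply Set.mem_biUnion hθ₀
      rw [hset]
      exact Set.mem_insert _ _
    by_contra hno
    push_neg at hno
    obtain ⟨r1, hr1Z, hr1⟩ := Set.not_subset.mp (hno (lpt a1 b1 h1) (lpt a1 b1 h1))
    obtain ⟨r2, hr2Z, hr2⟩ := Set.not_subset.mp (hno (lpt a1 b1 h1) r1)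
    simp only [Set.mem_insert_iff, Set.mem_singleton_iff, not_or] at hr1 hr2
    have hsub3 : ({lpt a1 b1 h1, r1, r2} : Set P1C) ⊆ Z := by
      intro x hx
      rcases hx with rfl | rfl | rfl
      · exact hp0
      · exact hr1Z
      · exact hr2Z
    have h3 : ({lpt a1 b1 h1, r1, r2} : Set P1C).ncard = 3 := by
      rw [Set.ncard_insert_of_notMem, Set.ncard_insert_of_notMem, Set.ncard_singleton]
      · simp only [Set.mem_singleton_iff]
        exact fun h => hr2.2 h.symm
      · simp only [Set.mem_insert_iff, Set.mem_singleton_iff, not_or]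
        exact ⟨fun h => hr1.1 h.symm, fun h => hr2.1 h.symm⟩
    have := Set.ncard_le_ncard hsub3 hZfin
    omega
  obtain ⟨p, q, hsubpq⟩ := hex
  -- every root's coefficient vector lies on one of the three lines
  have hline : ∀ θ ∈ Φ, ∃ i : Fin 3, OnLine u v w (p.rep 0) (p.rep 1) (q.rep 0) (q.rep 1) θ i := by
    intro θ hθ
    obtain ⟨a1, b1, a2, b2, h1, h2, hu', hv', hw', hset⟩ := hq θ hθ
    have m1 : lpt a1 b1 h1 = p ∨ lpt a1 b1 h1 = q := by
      have : lpt a1 b1 h1 ∈ Z := by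
        apply Set.mem_biUnion hθ
        rw [hset]; exact Set.mem_insert _ _
      have := hsubpq this
      simpa using this
    have m2 : lpt a2 b2 h2 = p ∨ lpt a2 b2 h2 = q := by
      have : lpt a2 b2 h2 ∈ Z := by
        apply Set.mem_biUnion hθ
        rw [hset]; exact Set.mem_insert_iff.mpr (Or.inr rfl)
      have := hsubpq this
      simpa using this
    rcases m1 with m1 | m1 <;> rcases m2 with m2 | m2
    · obtain ⟨t1, ht1, e1a, e1b⟩ := lpt_eq a1 b1 h1 p m1
      obtain ⟨t2, ht2, e2a, e2b⟩ := lpt_eq a2 b2 h2 p m2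
      refine ⟨0, t1*t2, mul_ne_zero ht1 ht2, ?_, ?_, ?_⟩
      · rw [hu', e1a, e2a]
        simp only [Evec, Matrix.cons_val_zero, Matrix.cons_val_one, Matrix.head_cons,
          Matrix.cons_val_two, Matrix.tail_cons]
        ring
      · rw [hv', e1a, e1b, e2a, e2b]
        simp only [Evec, Matrix.cons_val_zero, Matrix.cons_val_one, Matrix.head_cons,
          Matrix.cons_val_two, Matrix.tail_cons]
        ring
      · rw [hw', e1b, e2b]
        simp only [Evec, Matrix.cons_val_zero, Matrix.cons_val_one, Matrix.head_cons,
          Matrix.cons_val_two, Matrix.tail_cons]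
        ring
    · obtain ⟨t1, ht1, e1a, e1b⟩ := lpt_eq a1 b1 h1 p m1
      obtain ⟨t2, ht2, e2a, e2b⟩ := lpt_eq a2 b2 h2 q m2
      refine ⟨1, t1*t2, mul_ne_zero ht1 ht2, ?_, ?_, ?_⟩
      · rw [hu', e1a, e2a]
        simp only [Evec, Matrix.cons_val_zero, Matrix.cons_val_one, Matrix.head_cons,
          Matrix.cons_val_two, Matrix.tail_cons]
        ring
      · rw [hv', e1a, e1b, e2a, e2b]
        simp only [Evec, Matrix.cons_val_zero, Matrix.cons_val_one, Matrix.head_cons,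
          Matrix.cons_val_two, Matrix.tail_cons]
        ring
      · rw [hw', e1b, e2b]
        simp only [Evec, Matrix.cons_val_zero, Matrix.cons_val_one, Matrix.head_cons,
          Matrix.cons_val_two, Matrix.tail_cons]
        ring
    · obtain ⟨t1, ht1, e1a, e1b⟩ := lpt_eq a1 b1 h1 q m1
      obtain ⟨t2, ht2, e2a, e2b⟩ := lpt_eq a2 b2 h2 p m2
      refine ⟨1, t1*t2, mul_ne_zero ht1 ht2, ?_, ?_, ?_⟩
      · rw [hu', e1a, e2a]
        simp only [Evec, Matrix.cons_val_zero, Matrix.cons_val_one, Matrix.head_cons,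
          Matrix.cons_val_two, Matrix.tail_cons]
        ring
      · rw [hv', e1a, e1b, e2a, e2b]
        simp only [Evec, Matrix.cons_val_zero, Matrix.cons_val_one, Matrix.head_cons,
          Matrix.cons_val_two, Matrix.tail_cons]
        ring
      · rw [hw', e1b, e2b]
        simp only [Evec, Matrix.cons_val_zero, Matrix.cons_val_one, Matrix.head_cons,
          Matrix.cons_val_two, Matrix.tail_cons]
        ring
    · obtain ⟨t1, ht1, e1a, e1b⟩ := lpt_eq a1 b1 h1 q m1
      obtain ⟨t2, ht2, e2a, e2b⟩ := lpt_eq a2 b2 h2 q m2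
      refine ⟨2, t1*t2, mul_ne_zero ht1 ht2, ?_, ?_, ?_⟩
      · rw [hu', e1a, e2a]
        simp only [Evec, Matrix.cons_val_zero, Matrix.cons_val_one, Matrix.head_cons,
          Matrix.cons_val_two, Matrix.tail_cons]
        ring
      · rw [hv', e1a, e1b, e2a, e2b]
        simp only [Evec, Matrix.cons_val_zero, Matrix.cons_val_one, Matrix.head_cons,
          Matrix.cons_val_two, Matrix.tail_cons]
        ring
      · rw [hw', e1b, e2b]
        simp only [Evec, Matrix.cons_val_zero, Matrix.cons_val_one, Matrix.head_cons,
          Matrix.cons_val_two, Matrix.tail_cons]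
        ring
  -- Case split on whether p = q
  rcases eq_or_ne p q with heq | hne
  · subst heq
    have hEc : ∀ (i c : Fin 3), Evec (p.rep 0) (p.rep 1) (p.rep 0) (p.rep 1) i c
        = Evec (p.rep 0) (p.rep 1) (p.rep 0) (p.rep 1) 0 c := by
      intro i c
      fin_cases i <;> fin_cases c <;> (simp [Evec]; try ring)
    have hE : ¬(Evec (p.rep 0) (p.rep 1) (p.rep 0) (p.rep 1) 0 0 = 0
        ∧ Evec (p.rep 0) (p.rep 1) (p.rep 0) (p.rep 1) 0 1 = 0
        ∧ Evec (p.rep 0) (p.rep 1) (p.rep 0) (p.rep 1) 0 2 = 0) := by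
      rintro ⟨c0, c1, c2⟩
      simp only [Evec, Matrix.cons_val_zero, Matrix.cons_val_one, Matrix.head_cons,
        Matrix.cons_val_two, Matrix.tail_cons] at c0 c2
      exact rep_nz p ⟨pow_eq_zero_iff two_ne_zero |>.mp c2, pow_eq_zero_iff two_ne_zero |>.mp c0⟩
    apply final_contr Φ hRS.2.1 u v w hli _ _ _ hE
    intro θ hθ
    obtain ⟨i, l, hl, h0, h1, h2⟩ := hline θ hθ
    exact ⟨l, by rw [h0, hEc i 0], by rw [h1, hEc i 1], by rw [h2, hEc i 2]⟩
  · -- p ≠ q : the three lines are genuinely distinct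
    have hD : p.rep 0 * q.rep 1 - p.rep 1 * q.rep 0 ≠ 0 := by
      intro hD0
      apply hne
      rw [← p.mk_rep, ← q.mk_rep, Projectivization.mk_eq_mk_iff']
      by_cases hq0 : q.rep 0 = 0
      · have hq1 : q.rep 1 ≠ 0 := fun h => rep_nz q ⟨hq0, h⟩
        have hp0 : p.rep 0 = 0 := by
          have hh : p.rep 0 * q.rep 1 = 0 := by rw [hq0] at hD0; linear_combination hD0
          exact (mul_eq_zero.mp hh).resolve_right hq1
        refine ⟨p.rep 1 / q.rep 1, ?_⟩
        funext i
        fin_cases i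
        · show p.rep 1 / q.rep 1 * q.rep 0 = p.rep 0
          rw [hq0, hp0, mul_zero]
        · show p.rep 1 / q.rep 1 * q.rep 1 = p.rep 1
          field_simp
      · refine ⟨p.rep 0 / q.rep 0, ?_⟩
        funext i
        fin_cases i
        · show p.rep 0 / q.rep 0 * q.rep 0 = p.rep 0
          field_simp
        · show p.rep 0 / q.rep 0 * q.rep 1 = p.rep 1
          field_simp
          linear_combination hD0
    have hsum : ∀ α ∈ Φ, ∀ β ∈ Φ, α + β ∈ Φ → ∀ i : Fin 3,
        OnLine u v w (p.rep 0) (p.rep 1) (q.rep 0) (q.rep 1) α i →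
        OnLine u v w (p.rep 0) (p.rep 1) (q.rep 0) (q.rep 1) β i
          ∧ OnLine u v w (p.rep 0) (p.rep 1) (q.rep 0) (q.rep 1) (α + β) i := by
      intro α hα β hβ hαβ i hOα
      obtain ⟨j, hOβ⟩ := hline β hβ
      obtain ⟨k, hOs⟩ := hline (α + β) hαβ
      obtain ⟨hji, hki⟩ := onLine_sum hD hOα hOβ hOs
      exact ⟨hji ▸ hOβ, hki ▸ hOs⟩
    have hsame : ∀ α ∈ Φ, ∀ β ∈ Φ, dotR α β ≠ 0 → ∀ i : Fin 3,
        OnLine u v w (p.rep 0) (p.rep 1) (q.rep 0) (q.rep 1) α i →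
        OnLine u v w (p.rep 0) (p.rep 1) (q.rep 0) (q.rep 1) β i := by
      intro α hα β hβ hdot i hOα
      by_cases hba : β = α
      · rwa [hba]
      by_cases hba' : β = -α
      · rw [hba']; exact onLine_neg hOα
      rcases root_sum Φ hRS hred α β hα hβ hdot hba hba' with hc | hc | hc
      · exact (hsum α hα β hβ hc i hOα).1
      · have hs : α + (β - α) = β := by ring
        have hmem : α + (β - α) ∈ Φ := by rw [hs]; exact hβ
        have := (hsum α hα (β - α) hc hmem i hOα).2
        rwa [hs] at this
      · obtain ⟨j, hOγ⟩ := hline (α - β) hc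
        obtain ⟨k, hOβ'⟩ := hline β hβ
        have hs : (α - β) + β = α := by ring
        have hOs : OnLine u v w (p.rep 0) (p.rep 1) (q.rep 0) (q.rep 1) ((α - β) + β) i := by
          rwa [hs]
        obtain ⟨hkj, hij⟩ := onLine_sum hD hOγ hOβ' hOs
        have : k = i := hkj.trans hij.symm
        rwa [this] at hOβ'
    obtain ⟨i₀, hO₀⟩ := hline θ₀ hθ₀
    set A : Set (Fin d → ℝ) :=
      {x | x ∈ Φ ∧ OnLine u v w (p.rep 0) (p.rep 1) (q.rep 0) (q.rep 1) x i₀} with hA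
    set B : Set (Fin d → ℝ) :=
      {x | x ∈ Φ ∧ ¬ OnLine u v w (p.rep 0) (p.rep 1) (q.rep 0) (q.rep 1) x i₀} with hB
    have hUnion : (Φ : Set (Fin d → ℝ)) = A ∪ B := by
      ext x
      simp only [hA, hB, Set.mem_union, Set.mem_setOf_eq, Finset.mem_coe]
      tauto
    have hdisj : Disjoint A B := by
      rw [Set.disjoint_left]
      rintro x ⟨_, hx⟩ ⟨_, hx'⟩
      exact hx' hx
    have horth : ∀ a ∈ A, ∀ b ∈ B, dotR a b = 0 := by
      intro a ha b hb
      by_contra hab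
      exact hb.2 (hsame a ha.1 b hb.1 hab i₀ ha.2)
    rcases hirr A B hUnion hdisj horth with hAe | hBe
    · have : θ₀ ∈ A := ⟨hθ₀, hO₀⟩
      rw [hAe] at this
      exact this
    · apply final_contr Φ hRS.2.1 u v w hli _ _ _ (Evec_ne hD i₀)
      intro θ hθ
      have hθAB : θ ∈ A ∪ B := by rw [← hUnion]; exact hθ
      have hθA : θ ∈ A := by
        rcases hθAB with h | h
        · exact h
        · rw [hBe] at h; exact absurd h (Set.notMem_empty θ)
      obtain ⟨l, _, h0, h1, h2⟩ := hθA.2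
      exact ⟨l, h0, h1, h2⟩


end
end
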